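/- arXiv:1003.1550 — 7 statements merged into one kernel-verified Lean document; each statement's English description precedes it below -/
import Mathlib

section
/- If a social choice function f is implementable (in dominant strategies), then f satisfies positive association of differences (PAD): for all type profiles s, t ∈ 𝕋ⁿ such that f(t) = a and s^a − t^a ≫ s^b − t^b for all b ≠ a, one has f(s) = a. -/
open Function

/-- A type profile: column `t a` is the utility vector in `ℝⁿ` for alternative `a`;
agent `i`'s type (row) is `fun a => t a i`. -/
abbrev Profile (n : ℕ) (A : Type*) := A → Fin n → ℝ

/-- Payment rule `p` implements `f` in dominant strategies on the domain `Dom`: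
no agent `i` can gain by a unilateral deviation (a change of his own row only). -/
def ImplementsOn {n : ℕ} {A : Type*} (Dom : Set (Profile n A)) (f : Profile n A → A)
    (p : Profile n A → Fin n → ℝ) : Prop :=
  ∀ t ∈ Dom, ∀ s ∈ Dom, ∀ i : Fin n,
    (∀ j : Fin n, j ≠ i → ∀ a : A, s a j = t a j) →
    t (f t) i + p t i ≥ t (f s) i + p s i

/-- `f` is implementable in dominant strategies on `Dom`. -/
def ImplementableOn {n : ℕ} {A : Type*} (Dom : Set (Profile n A))
    (f : Profile n A → A) : Prop :=
  ∃ p, ImplementsOn Dom f p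

/-- The choice set `C^f(t)`: alternatives `a` such that raising the column of `a`
by any strictly positive `ε` (staying inside the domain) makes `f` choose `a`. -/
def ChoiceSetOn {n : ℕ} {A : Type*} [DecidableEq A] (Dom : Set (Profile n A))
    (f : Profile n A → A) (t : Profile n A) : Set A :=
  {a | ∀ ε : Fin n → ℝ, (∀ i, 0 < ε i) →
    Function.update t a (t a + ε) ∈ Dom →
    f (Function.update t a (t a + ε)) = a}

/-- `f` is neutral: permuting the columns of a profile permutes the choice set
accordingly (the profile `s` induced by `ρ` has `s^{ρ a} = t^a`, i.e. `s b = t (ρ⁻¹ b)`). -/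
def NeutralOn {n : ℕ} {A : Type*} [DecidableEq A] (Dom : Set (Profile n A))
    (f : Profile n A → A) : Prop :=
  ∀ t ∈ Dom, ∀ ρ : Equiv.Perm A,
    ChoiceSetOn Dom f (fun b => t (ρ.symm b)) = ρ '' ChoiceSetOn Dom f t

/-- The `m`-dimensional open interval domain: agent `i`'s values all lie in the
open interval `(α i, β i)` (endpoints possibly infinite). -/
def IntervalDom (n : ℕ) (A : Type*) (α β : Fin n → EReal) : Set (Profile n A) :=
  {t | ∀ (a : A) (i : Fin n), α i < (t a i : EReal) ∧ (t a i : EReal) < β i}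

/-- The set `𝔻` of feasible utility vectors. -/
def DSet {n : ℕ} (α β : Fin n → EReal) : Set (Fin n → ℝ) :=
  {x | ∀ i : Fin n, α i < (x i : EReal) ∧ (x i : EReal) < β i}

/-- The strict relation `P^f` induced by `f` on utility vectors. -/
def PRel {n : ℕ} {A : Type*} [DecidableEq A] (Dom : Set (Profile n A))
    (f : Profile n A → A) (x y : Fin n → ℝ) : Prop :=
  ∃ t ∈ Dom, ∃ a b : A, a ≠ b ∧ t a = x ∧ t b = y ∧
    a ∈ ChoiceSetOn Dom f t ∧ b ∉ ChoiceSetOn Dom f t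

/-- The indifference relation `I^f` induced by `f` on utility vectors. -/
def IRel {n : ℕ} {A : Type*} [DecidableEq A] (Dom : Set (Profile n A))
    (f : Profile n A → A) (x y : Fin n → ℝ) : Prop :=
  ∃ t ∈ Dom, ∃ a b : A, a ≠ b ∧ t a = x ∧ t b = y ∧
    a ∈ ChoiceSetOn Dom f t ∧ b ∈ ChoiceSetOn Dom f t

/-- The induced social welfare relation `R^f`. -/
def RRel {n : ℕ} {A : Type*} [DecidableEq A] (Dom : Set (Profile n A))
    (f : Profile n A → A) (x y : Fin n → ℝ) : Prop :=
  PRel Dom f x y ∨ IRel Dom f x y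

/-- The domain `𝕋ⁿ = T₁ × … × Tₙ`: each agent `i`'s row lies in `T i ⊆ ℝ^m`. -/
def ProdDom {n : ℕ} {A : Type*} (T : Fin n → Set (A → ℝ)) : Set (Profile n A) :=
  {t | ∀ i : Fin n, (fun a => t a i) ∈ T i}

/-
Switching the agents from `t` to `s` one at a time, each step is a unilateral deviation, so by
weak monotonicity (the 2-cycle inequality obtained by adding the two incentive constraints) the
chosen alternative can only move to some `b` whose utility rose at least as much as that of `a`
for the deviating agent. The strict dominance `s^a - t^a ≫ s^b - t^b` rules this out, so `a`
stays chosen along the whole path from `t` to `s`.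
-/

theorem ImplementsOn.sub_le_sub_of_unilateral {n : ℕ} {A : Type*} {Dom : Set (Profile n A)}
    {f : Profile n A → A} {p : Profile n A → Fin n → ℝ} (hp : ImplementsOn Dom f p)
    {s t : Profile n A} (hs : s ∈ Dom) (ht : t ∈ Dom) {i : Fin n}
    (hoff : ∀ j, j ≠ i → ∀ c, s c j = t c j) :
    s (f t) i - t (f t) i ≤ s (f s) i - t (f s) i := by
  have hst := hp s hs t ht i fun j hj c => (hoff j hj c).symm
  have hts := hp t ht s hs i hoff
  linarith

theorem ImplementsOn.eq_of_unilateral {n : ℕ} {A : Type*} {Dom : Set (Profile n A)}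
    {f : Profile n A → A} {p : Profile n A → Fin n → ℝ} (hp : ImplementsOn Dom f p)
    {s t : Profile n A} (hs : s ∈ Dom) (ht : t ∈ Dom) {i : Fin n}
    (hoff : ∀ j, j ≠ i → ∀ c, s c j = t c j) {a : A} (hfa : f t = a)
    (hdom : ∀ b, b ≠ a → s b i - t b i < s a i - t a i) :
    f s = a := by
  by_contra hne
  have hmono := hp.sub_le_sub_of_unilateral hs ht hoff
  rw [hfa] at hmono
  exact (hdom (f s) hne).not_ge hmono

section Mix

variable {n : ℕ} {A : Type*}

def mixProfile (S : Finset (Fin n)) (s t : Profile n A) : Profile n A :=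
  fun c => S.piecewise (s c) (t c)

theorem mixProfile_mem_prodDom {T : Fin n → Set (A → ℝ)} (S : Finset (Fin n))
    {s t : Profile n A} (hs : s ∈ ProdDom T) (ht : t ∈ ProdDom T) :
    mixProfile S s t ∈ ProdDom T := by
  intro i
  by_cases hi : i ∈ S
  · simpa [mixProfile, hi] using hs i
  · simpa [mixProfile, hi] using ht i

@[simp]
theorem mixProfile_empty (s t : Profile n A) : mixProfile ∅ s t = t := by
  ext c i
  simp [mixProfile]

@[simp]
theorem mixProfile_univ (s t : Profile n A) : mixProfile Finset.univ s t = s := by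
  ext c i
  simp [mixProfile]

theorem mixProfile_insert_apply_of_ne (S : Finset (Fin n)) (s t : Profile n A) {i j : Fin n}
    (hj : j ≠ i) (c : A) : mixProfile (insert i S) s t c j = mixProfile S s t c j := by
  simp [mixProfile, Finset.piecewise, hj]

theorem mixProfile_insert_apply_self {S : Finset (Fin n)} (s t : Profile n A) {i : Fin n}
    (hi : i ∉ S) (c : A) :
    mixProfile (insert i S) s t c i - mixProfile S s t c i = s c i - t c i := by
  simp [mixProfile, hi]

end Mix

theorem ImplementsOn.apply_mixProfile_eq {n : ℕ} {A : Type*} {T : Fin n → Set (A → ℝ)}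
    {f : Profile n A → A} {p : Profile n A → Fin n → ℝ} (hp : ImplementsOn (ProdDom T) f p)
    {s t : Profile n A} (hs : s ∈ ProdDom T) (ht : t ∈ ProdDom T) {a : A} (hfa : f t = a)
    (hdom : ∀ b, b ≠ a → ∀ i, s b i - t b i < s a i - t a i) (S : Finset (Fin n)) :
    f (mixProfile S s t) = a := by
  induction S using Finset.induction_on with
  | empty => simpa using hfa
  | insert i S hi ih =>
    refine hp.eq_of_unilateral (mixProfile_mem_prodDom _ hs ht) (mixProfile_mem_prodDom _ hs ht)
      (fun j hj c => mixProfile_insert_apply_of_ne S s t hj c) ih fun b hb => ?_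
    simpa only [mixProfile_insert_apply_self s t hi] using hdom b hb i

theorem implementable_satisfies_PAD_general
    {n : ℕ} {A : Type*}
    (T : Fin n → Set (A → ℝ)) (f : Profile n A → A)
    (hf : ImplementableOn (ProdDom T) f)
    (s t : Profile n A) (hs : s ∈ ProdDom T) (ht : t ∈ ProdDom T)
    (a : A) (hfa : f t = a)
    (hdom : ∀ b : A, b ≠ a → ∀ i : Fin n, s b i - t b i < s a i - t a i) :
    f s = a := by
  obtain ⟨p, hp⟩ := hf
  simpa using hp.apply_mixProfile_eq hs ht hfa hdom Finset.univ

/-- every implementable social choice function satisfies PAD. -/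
theorem implementable_satisfies_PAD
    {n : ℕ} {A : Type*} [Fintype A]
    (hn : 0 < n) (hA : 3 ≤ Fintype.card A)
    (T : Fin n → Set (A → ℝ)) (f : Profile n A → A)
    (hf : ImplementableOn (ProdDom T) f)
    (s t : Profile n A) (hs : s ∈ ProdDom T) (ht : t ∈ ProdDom T)
    (a : A) (hfa : f t = a)
    (hdom : ∀ b : A, b ≠ a → ∀ i : Fin n, s b i - t b i < s a i - t a i) :
    f s = a :=
  implementable_satisfies_PAD_general T f hf s t hs ht a hfa hdom
end

section
/- Suppose each T_i is an m-dimensional open interval domain and f is an implementable social choice function. Then for every type profile t ∈ 𝕋ⁿ, the chosen alternative lies in the choice set: f(t) ∈ C^f(t). In particular every choice set C^f(t) is non-empty. -/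
/-!
Implementability forces two-cycle monotonicity: if agent `i` alone changes his report from
`t` to `s`, then `t (f s) i + s (f t) i ≤ t (f t) i + s (f s) i`. Hence raising only the value of
the chosen alternative `a = f t` in a single row keeps `a` chosen. Raising the column `t a` by
`ε ≫ 0` one agent at a time passes through profiles that stay in the product domain, so `a` is
still chosen after the full raise, i.e. `f t ∈ C^f(t)`.
-/

open Function

section Monotonicity

variable {n : ℕ} {A : Type*} {Dom : Set (Profile n A)} {f : Profile n A → A}
  {p : Profile n A → Fin n → ℝ}

theorem ImplementsOn.add_le_add (hp : ImplementsOn Dom f p) {t s : Profile n A}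
    (ht : t ∈ Dom) (hs : s ∈ Dom) {i : Fin n} (hrow : ∀ j ≠ i, ∀ b, s b j = t b j) :
    t (f s) i + s (f t) i ≤ t (f t) i + s (f s) i := by
  have hts := hp t ht s hs i hrow
  have hst := hp s hs t ht i fun j hj b => (hrow j hj b).symm
  linarith

theorem ImplementsOn.apply_eq_of_raise (hp : ImplementsOn Dom f p) {t s : Profile n A}
    (ht : t ∈ Dom) (hs : s ∈ Dom) {i : Fin n} (hrow : ∀ j ≠ i, ∀ b, s b j = t b j)
    {a : A} (hta : f t = a) (hraise : t a i < s a i) (hfix : ∀ b ≠ a, s b i = t b i) :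
    f s = a := by
  by_contra hsa
  have hmono := hp.add_le_add ht hs hrow
  rw [hta, hfix _ hsa] at hmono
  linarith

variable [DecidableEq A]

theorem ImplementsOn.apply_update_add_piecewise (hp : ImplementsOn Dom f p) {t : Profile n A}
    {ε : Fin n → ℝ} (hε : ∀ i, 0 < ε i)
    (hDom : ∀ S : Finset (Fin n), update t (f t) (t (f t) + S.piecewise ε 0) ∈ Dom)
    (S : Finset (Fin n)) :
    f (update t (f t) (t (f t) + S.piecewise ε 0)) = f t := by
  induction S using Finset.induction_on with
  | empty => simp
  | insert i S hiS ih =>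
    refine hp.apply_eq_of_raise (i := i) (hDom S) (hDom (insert i S)) (fun j hj b => ?_) ih ?_ ?_
    · rcases eq_or_ne b (f t) with rfl | hb
      · simp [Finset.piecewise_insert_of_ne _ _ _ hj]
      · simp [update_of_ne hb]
    · simp [hiS, hε i]
    · intro b hb
      simp [update_of_ne hb]

end Monotonicity

theorem mem_intervalDom_of_forall_eq_or_eq {n : ℕ} {A : Type*} {α β : Fin n → EReal}
    {t t' s : Profile n A} (ht : t ∈ IntervalDom n A α β) (ht' : t' ∈ IntervalDom n A α β)
    (hs : ∀ b i, s b i = t b i ∨ s b i = t' b i) : s ∈ IntervalDom n A α β := by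
  intro b i
  rcases hs b i with h | h <;> rw [h]
  exacts [ht b i, ht' b i]

theorem chosen_mem_choiceSet_general
    {n : ℕ} {A : Type*} [DecidableEq A]
    (α β : Fin n → EReal)
    (f : Profile n A → A)
    (hf : ImplementableOn (IntervalDom n A α β) f)
    (t : Profile n A) (ht : t ∈ IntervalDom n A α β) :
    f t ∈ ChoiceSetOn (IntervalDom n A α β) f t ∧
      (ChoiceSetOn (IntervalDom n A α β) f t).Nonempty := by
  obtain ⟨p, hp⟩ := hf
  have hmem : f t ∈ ChoiceSetOn (IntervalDom n A α β) f t := by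
    intro ε hε hraised
    have hybrid_mem (S : Finset (Fin n)) :
        update t (f t) (t (f t) + S.piecewise ε 0) ∈ IntervalDom n A α β := by
      refine mem_intervalDom_of_forall_eq_or_eq ht hraised fun b i => ?_
      rcases eq_or_ne b (f t) with rfl | hb
      · by_cases hi : i ∈ S <;> simp [hi]
      · simp [update_of_ne hb]
    simpa using hp.apply_update_add_piecewise hε hybrid_mem Finset.univ
  exact ⟨hmem, f t, hmem⟩

/-- on open interval domains, the chosen alternative lies in the
choice set; in particular choice sets are non-empty. -/
theorem chosen_mem_choiceSet
    {n : ℕ} {A : Type*} [Fintype A] [DecidableEq A]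
    (hn : 0 < n) (hA : 3 ≤ Fintype.card A)
    (α β : Fin n → EReal) (hαβ : ∀ i, α i < β i)
    (f : Profile n A → A)
    (hf : ImplementableOn (IntervalDom n A α β) f)
    (t : Profile n A) (ht : t ∈ IntervalDom n A α β) :
    f t ∈ ChoiceSetOn (IntervalDom n A α β) f t ∧
      (ChoiceSetOn (IntervalDom n A α β) f t).Nonempty :=
  chosen_mem_choiceSet_general α β f hf t ht
end

section
/- Suppose each T_i is an m-dimensional open interval domain and f is an implementable social choice function. If f is neutral, then f satisfies non-imposition: for every alternative a ∈ A there exists a type profile t ∈ 𝕋ⁿ with f(t) = a. -/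
open Function

/-
Implementability forces monotonicity: raising only the utilities of the chosen
alternative cannot change the choice, so `f t ∈ C^f(t)` for every profile `t`. Take
`t` with all columns equal. Swapping `f t` and `a` leaves `t` unchanged, so neutrality puts
`a` into `C^f(t)` too, and raising the column of `a` slightly (possible since the domain is
open) yields a profile at which `f` chooses `a`.
-/

theorem ImplementsOn.apply_eq_of_raise_chosen {n : ℕ} {A : Type*} {Dom : Set (Profile n A)}
    {f : Profile n A → A} {p : Profile n A → Fin n → ℝ} (himp : ImplementsOn Dom f p)
    {t t' : Profile n A} (ht : t ∈ Dom) (ht' : t' ∈ Dom) {i : Fin n}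
    (hrow : ∀ j, j ≠ i → ∀ a, t' a j = t a j)
    {b : A} (hb : f t = b) (hcol : ∀ a, a ≠ b → t' a i = t a i) (hlt : t b i < t' b i) :
    f t' = b := by
  have h₁ := himp t' ht' t ht i fun j hj a => (hrow j hj a).symm
  have h₂ := himp t ht t' ht' i hrow
  -- otherwise the two incentive constraints add up to `t' b i ≤ t b i`
  by_contra hne
  have := hcol _ hne
  rw [hb] at h₁ h₂
  linarith

def raiseFirstAgents {n : ℕ} {A : Type*} [DecidableEq A] (t : Profile n A) (b : A)
    (ε : Fin n → ℝ) (k : ℕ) : Profile n A :=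
  update t b fun j => t b j + if j.val < k then ε j else 0

section raiseFirstAgents

variable {n : ℕ} {A : Type*} [DecidableEq A] {t : Profile n A} {b : A} {ε : Fin n → ℝ}

@[simp]
theorem raiseFirstAgents_zero : raiseFirstAgents t b ε 0 = t := by
  simp [raiseFirstAgents]

theorem raiseFirstAgents_of_le {k : ℕ} (hk : n ≤ k) :
    raiseFirstAgents t b ε k = update t b (t b + ε) := by
  unfold raiseFirstAgents
  congr 1
  funext j
  simp [show j.val < k by omega]

theorem raiseFirstAgents_of_ne {k : ℕ} {a : A} (ha : a ≠ b) : raiseFirstAgents t b ε k a = t a :=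
  update_of_ne ha _ _

theorem raiseFirstAgents_self_apply (k : ℕ) (j : Fin n) :
    raiseFirstAgents t b ε k b j = t b j + if j.val < k then ε j else 0 := by
  simp [raiseFirstAgents]

theorem raiseFirstAgents_succ_apply_of_ne (k : ℕ) (a : A) {j : Fin n} (hj : j.val ≠ k) :
    raiseFirstAgents t b ε (k + 1) a j = raiseFirstAgents t b ε k a j := by
  rcases eq_or_ne a b with rfl | ha
  · simp only [raiseFirstAgents_self_apply, show j.val < k + 1 ↔ j.val < k by omega]
  · simp only [raiseFirstAgents_of_ne ha]

theorem le_raiseFirstAgents (hε : ∀ j, 0 ≤ ε j) (k : ℕ) : t ≤ raiseFirstAgents t b ε k := by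
  intro a j
  rcases eq_or_ne a b with rfl | ha
  · rw [raiseFirstAgents_self_apply]
    split_ifs <;> linarith [hε j]
  · rw [raiseFirstAgents_of_ne ha]

theorem raiseFirstAgents_le (hε : ∀ j, 0 ≤ ε j) (k : ℕ) :
    raiseFirstAgents t b ε k ≤ update t b (t b + ε) := by
  intro a j
  rcases eq_or_ne a b with rfl | ha
  · rw [raiseFirstAgents_self_apply, update_self, Pi.add_apply]
    split_ifs <;> linarith [hε j]
  · rw [raiseFirstAgents_of_ne ha, update_of_ne ha]

end raiseFirstAgents

theorem ImplementableOn.apply_mem_choiceSetOn {n : ℕ} {A : Type*} [DecidableEq A]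
    {Dom : Set (Profile n A)} [Dom.OrdConnected] {f : Profile n A → A}
    (hf : ImplementableOn Dom f) {t : Profile n A} (ht : t ∈ Dom) :
    f t ∈ ChoiceSetOn Dom f t := by
  obtain ⟨p, himp⟩ := hf
  intro ε hε hmem
  set T := raiseFirstAgents t (f t) ε
  have hT_mem (k : ℕ) : T k ∈ Dom :=
    Set.Icc_subset Dom ht hmem ⟨le_raiseFirstAgents (fun i => (hε i).le) k,
      raiseFirstAgents_le (fun i => (hε i).le) k⟩
  have hT_eq : ∀ k ≤ n, f (T k) = f t := by
    intro k
    induction k with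
    | zero => simp [T]
    | succ k ih =>
      intro hk
      refine himp.apply_eq_of_raise_chosen (i := ⟨k, hk⟩) (hT_mem k) (hT_mem (k + 1))
        (fun j hj a => raiseFirstAgents_succ_apply_of_ne _ _ fun h => hj (Fin.ext h))
        (ih (by omega)) (fun a ha => by simp only [T, raiseFirstAgents_of_ne ha]) ?_
      simp [T, raiseFirstAgents_self_apply, hε]
  rw [← raiseFirstAgents_of_le le_rfl, hT_eq n le_rfl]

theorem NeutralOn.mem_choiceSetOn_of_column_eq {n : ℕ} {A : Type*} [DecidableEq A]
    {Dom : Set (Profile n A)} {f : Profile n A → A} (hneu : NeutralOn Dom f)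
    {t : Profile n A} (ht : t ∈ Dom) {a b : A} (hab : t a = t b)
    (hb : b ∈ ChoiceSetOn Dom f t) : a ∈ ChoiceSetOn Dom f t := by
  have hswap : (fun c => t ((Equiv.swap b a).symm c)) = t := by
    funext c
    rw [Equiv.symm_swap, Equiv.swap_apply_def]
    split_ifs with h₁ h₂ <;> simp_all
  rw [← hswap, hneu t ht]
  exact ⟨b, hb, Equiv.swap_apply_left b a⟩

instance ordConnected_intervalDom {n : ℕ} {A : Type*} {α β : Fin n → EReal} :
    (IntervalDom n A α β).OrdConnected :=
  ⟨fun _ hs _ hu _ ⟨hst, htu⟩ a i =>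
    ⟨(hs a i).1.trans_le (EReal.coe_le_coe_iff.2 (hst a i)),
      (EReal.coe_le_coe_iff.2 (htu a i)).trans_lt (hu a i).2⟩⟩

theorem exists_pos_update_add_mem_intervalDom {n : ℕ} {A : Type*} [DecidableEq A]
    {α β : Fin n → EReal} {t : Profile n A} (ht : t ∈ IntervalDom n A α β) (a : A) :
    ∃ ε : Fin n → ℝ, (∀ i, 0 < ε i) ∧ update t a (t a + ε) ∈ IntervalDom n A α β := by
  choose r hr hrβ using fun i => EReal.exists_between_coe_real (ht a i).2
  refine ⟨fun i => r i - t a i, fun i => sub_pos.2 (EReal.coe_lt_coe_iff.1 (hr i)), ?_⟩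
  intro c i
  rcases eq_or_ne c a with rfl | hc
  · simpa using ⟨(ht c i).1.trans (hr i), hrβ i⟩
  · simpa [update_of_ne hc] using ht c i

theorem neutral_implies_nonImposition_general
    {n : ℕ} {A : Type*} [DecidableEq A]
    (α β : Fin n → EReal) (hαβ : ∀ i, α i < β i)
    (f : Profile n A → A)
    (hf : ImplementableOn (IntervalDom n A α β) f)
    (hneu : NeutralOn (IntervalDom n A α β) f) :
    ∀ a : A, ∃ t ∈ IntervalDom n A α β, f t = a := by
  intro a
  choose x hαx hxβ using fun i => EReal.exists_between_coe_real (hαβ i)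
  set t : Profile n A := fun _ => x
  have ht : t ∈ IntervalDom n A α β := fun _ i => ⟨hαx i, hxβ i⟩
  have ha := hneu.mem_choiceSetOn_of_column_eq (a := a) ht rfl (hf.apply_mem_choiceSetOn ht)
  obtain ⟨ε, hε, hmem⟩ := exists_pos_update_add_mem_intervalDom ht a
  exact ⟨_, hmem, ha ε hε hmem⟩

/-- on open interval domains, an implementable and neutral social
choice function satisfies non-imposition. -/
theorem neutral_implies_nonImposition
    {n : ℕ} {A : Type*} [Fintype A] [DecidableEq A]
    (hn : 0 < n) (hA : 3 ≤ Fintype.card A)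
    (α β : Fin n → EReal) (hαβ : ∀ i, α i < β i)
    (f : Profile n A → A)
    (hf : ImplementableOn (IntervalDom n A α β) f)
    (hneu : NeutralOn (IntervalDom n A α β) f) :
    ∀ a : A, ∃ t ∈ IntervalDom n A α β, f t = a :=
  neutral_implies_nonImposition_general α β hαβ f hf hneu
end

section
/- (Binary Independence) Suppose each T_i is an m-dimensional open interval domain and f is an implementable social choice function. Let t = (t^a, t^b, t^{−ab}) and s = (s^a = t^a, s^b = t^b, s^{−ab}) be two type profiles that agree on the columns of alternatives a and b. Then: (a) if a, b ∈ C^f(t), then a ∈ C^f(s) if and only if b ∈ C^f(s); (b) if a ∈ C^f(t) but b ∉ C^f(t), then b ∉ C^f(s). -/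
open Function

/-! Dominant-strategy implementability makes `f` weakly monotone in each agent's report; changing
the rows one at a time gives: if `f t = w` and passing from `t` to `z` raises column `w` strictly
more than every other column, for every agent, then `f z = w`. After a small preliminary raise of
`w` the same holds when only `w ∈ C^f(t)`, so two alternatives forced in this way at one profile
coincide.

Lowering the columns other than `w` keeps `w` in the choice set, which reduces the theorem to the
case `s ≤ t` (through `t ⊓ s`). There, `b ∉ C^f(t)` yields some `c ≠ b` in the choice set once
`b` is raised by a small `e`. At the profile `z` raising `a` by `e/8` and `b` by `e/2`, the winner
is `a`, `b` or a third alternative, and a crossing with `b ∈ C^f(s)`, with `c`, or with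
`a ∈ C^f(t)` respectively gives a contradiction. -/

section BinaryIndependence

open Filter Topology

variable {n : ℕ} {A : Type*} {α β : Fin n → EReal} {f : Profile n A → A}
  {p : Profile n A → Fin n → ℝ}

local notation "𝒟" => IntervalDom n A α β

theorem exists_pos_forall_lt {ι : Type*} [Finite ι] {g : ι → ℝ} (hg : ∀ i, 0 < g i) :
    ∃ r > 0, ∀ i, r < g i := by
  obtain ⟨r, hr, hrpos⟩ := ((eventually_all.2 fun i => eventually_lt_nhds (hg i)).filter_mono
    nhdsWithin_le_nhds |>.and self_mem_nhdsWithin).exists (f := 𝓝[>] (0 : ℝ))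
  exact ⟨r, hrpos, hr⟩

theorem intervalDom_ordConnected : Set.OrdConnected 𝒟 :=
  ⟨fun _ hx _ hy _ hz c i =>
    ⟨(hx c i).1.trans_le (EReal.coe_le_coe_iff.2 (hz.1 c i)),
      (EReal.coe_le_coe_iff.2 (hz.2 c i)).trans_lt (hy c i).2⟩⟩

theorem inf_mem_intervalDom {s t : Profile n A} (ht : t ∈ 𝒟) (hs : s ∈ 𝒟) :
    t ⊓ s ∈ 𝒟 := fun c i => by
  rcases min_choice (t c i) (s c i) with h | h
  · simpa [h] using ht c i
  · simpa [h] using hs c i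

theorem isOpen_intervalDom [Finite A] : IsOpen 𝒟 := by
  simp only [IntervalDom, Set.ofPred_forall]
  refine isOpen_iInter_of_finite fun c => isOpen_iInter_of_finite fun i => ?_
  have : Continuous fun t : Profile n A => (t c i : EReal) :=
    continuous_coe_real_ereal.comp (by fun_prop)
  exact (isOpen_lt continuous_const this).inter (isOpen_lt this continuous_const)

def Profile.raise (t : Profile n A) (r : A → ℝ) : Profile n A := fun c i => t c i + r c

@[simp]
theorem Profile.raise_apply (t : Profile n A) (r : A → ℝ) (c : A) (i : Fin n) :
    t.raise r c i = t c i + r c := rfl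

theorem exists_pos_raise_mem_intervalDom [Finite A] {t : Profile n A} (ht : t ∈ 𝒟) :
    ∃ ρ > 0, t.raise (fun _ => ρ) ∈ 𝒟 := by
  have hcont : Continuous fun ρ : ℝ => t.raise fun _ => ρ := by
    unfold Profile.raise; fun_prop
  have hmem : ∀ᶠ ρ in 𝓝 (0 : ℝ), t.raise (fun _ => ρ) ∈ 𝒟 :=
    hcont.continuousAt.preimage_mem_nhds (isOpen_intervalDom.mem_nhds (by convert ht; ext; simp))
  obtain ⟨ρ, hρ, hρpos⟩ :=
    ((hmem.filter_mono nhdsWithin_le_nhds).and self_mem_nhdsWithin).exists (f := 𝓝[>] (0 : ℝ))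
  exact ⟨ρ, hρpos, hρ⟩

theorem Profile.raise_mem_intervalDom {s t : Profile n A} {ρ : ℝ} {r : A → ℝ} (hs : s ∈ 𝒟)
    (hle : s ≤ t) (hρ : t.raise (fun _ => ρ) ∈ 𝒟) (hr : ∀ c, 0 ≤ r c ∧ r c ≤ ρ) :
    s.raise r ∈ 𝒟 :=
  intervalDom_ordConnected.out hs hρ ⟨fun c i => by simpa using (hr c).1,
    fun c i => by simpa using add_le_add (hle c i) (hr c).2⟩

def FavorsStrictly (t z : Profile n A) (w : A) : Prop :=
  ∀ c ≠ w, ∀ i, z c i - t c i < z w i - t w i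

theorem favorsStrictly_raise {s t : Profile n A} {w : A} {r r' : A → ℝ} (hle : s ≤ t)
    (hw : s w = t w) (h : ∀ c ≠ w, r' c - r c < r' w - r w) :
    FavorsStrictly (t.raise r) (s.raise r') w := by
  intro c hc i
  simp only [Profile.raise_apply, hw]
  linarith [hle c i, h c hc]

theorem favorsStrictly_self_raise {t : Profile n A} {w : A} {r : A → ℝ}
    (h : ∀ c ≠ w, r c < r w) : FavorsStrictly t (t.raise r) w := by
  intro c hc i
  simpa using h c hc

namespace ImplementsOn

theorem apply_eq_of_deviation {Dom : Set (Profile n A)} (hp : ImplementsOn Dom f p)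
    {x y : Profile n A} {w : A} (hx : x ∈ Dom) (hy : y ∈ Dom) {i : Fin n}
    (hrows : ∀ j ≠ i, ∀ c, y c j = x c j) (hgain : ∀ c ≠ w, y c i - x c i < y w i - x w i)
    (hfx : f x = w) : f y = w := by
  by_contra hne
  have hxy := hp x hx y hy i hrows
  have hyx := hp y hy x hx i fun j hj c => (hrows j hj c).symm
  have := hgain _ hne
  subst hfx
  linarith

theorem apply_eq_of_favorsStrictly (hp : ImplementsOn 𝒟 f p) {t z : Profile n A} {w : A}
    (ht : t ∈ 𝒟) (hz : z ∈ 𝒟) (hfav : FavorsStrictly t z w) (hft : f t = w) :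
    f z = w := by
  let mix : Finset (Fin n) → Profile n A := fun S c i => if i ∈ S then z c i else t c i
  have hmix : ∀ S, mix S ∈ 𝒟 := fun S c i => by
    by_cases hi : i ∈ S <;> simp [mix, hi, ht c i, hz c i]
  have key : ∀ S, f (mix S) = w := by
    intro S
    induction S using Finset.induction_on with
    | empty => simpa [mix] using hft
    | insert i S hi ih =>
      refine hp.apply_eq_of_deviation (hmix S) (hmix _) (i := i) ?_ ?_ ih
      · intro j hj c
        simp [mix, hj]
      · intro c hc
        simpa [mix, hi] using hfav c hc i
  simpa [mix] using key Finset.univ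

variable [DecidableEq A]

theorem apply_mem_choiceSetOn (hp : ImplementsOn 𝒟 f p) {t : Profile n A} (ht : t ∈ 𝒟) :
    f t ∈ ChoiceSetOn 𝒟 f t := fun ε hε hmem =>
  hp.apply_eq_of_favorsStrictly ht hmem (fun c hc i => by simpa [hc] using hε i) rfl

theorem apply_eq_of_mem_choiceSetOn [Finite A] (hp : ImplementsOn 𝒟 f p) {t z : Profile n A}
    {w : A} (ht : t ∈ 𝒟) (hz : z ∈ 𝒟) (hw : w ∈ ChoiceSetOn 𝒟 f t)
    (hfav : FavorsStrictly t z w) : f z = w := by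
  obtain ⟨ρ, hρ, htρ⟩ := exists_pos_raise_mem_intervalDom ht
  obtain ⟨r, hr, hgap⟩ := exists_pos_forall_lt (ι := {c // c ≠ w} × Fin n)
    (g := fun x => (z w x.2 - t w x.2) - (z x.1 x.2 - t x.1 x.2))
    fun x => sub_pos.2 (hfav x.1 x.1.2 x.2)
  set ε : Fin n → ℝ := fun _ => min r ρ
  have hε : ∀ i, 0 < ε i := fun _ => lt_min hr hρ
  have hmem : Function.update t w (t w + ε) ∈ 𝒟 := by
    refine intervalDom_ordConnected.out ht htρ ⟨fun c i => ?_, fun c i => ?_⟩ <;>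
      by_cases hc : c = w <;> simp [hc, ε, hr.le, hρ.le]
  refine hp.apply_eq_of_favorsStrictly hmem hz (fun c hc i => ?_) (hw ε hε hmem)
  have := hgap (⟨c, hc⟩, i)
  simp only [Function.update_self, Function.update_of_ne hc, Pi.add_apply]
  linarith [min_le_left r ρ]

theorem eq_of_mem_choiceSetOn_of_favorsStrictly [Finite A] (hp : ImplementsOn 𝒟 f p)
    {x y w : Profile n A} {a b : A} (hx : x ∈ 𝒟) (hy : y ∈ 𝒟) (hw : w ∈ 𝒟)
    (ha : a ∈ ChoiceSetOn 𝒟 f x) (hb : b ∈ ChoiceSetOn 𝒟 f y)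
    (hxw : FavorsStrictly x w a) (hyw : FavorsStrictly y w b) : a = b :=
  (hp.apply_eq_of_mem_choiceSetOn hx hw ha hxw).symm.trans
    (hp.apply_eq_of_mem_choiceSetOn hy hw hb hyw)

theorem mem_choiceSetOn_of_le [Finite A] (hp : ImplementsOn 𝒟 f p) {s t : Profile n A} {w : A}
    (ht : t ∈ 𝒟) (hw : w ∈ ChoiceSetOn 𝒟 f t) (hle : s ≤ t) (hsw : s w = t w) :
    w ∈ ChoiceSetOn 𝒟 f s := fun ε hε hmem =>
  hp.apply_eq_of_mem_choiceSetOn ht hmem hw fun c hc i => by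
    simp only [Function.update_self, Function.update_of_ne hc, Pi.add_apply, hsw]
    linarith [hle c i, hε i]

theorem exists_mem_choiceSetOn_raise_of_notMem [Finite A] (hp : ImplementsOn 𝒟 f p)
    {t : Profile n A} {b : A} (hb : b ∉ ChoiceSetOn 𝒟 f t) {ρ : ℝ} (hρ : 0 < ρ) :
    ∃ e, 0 < e ∧ e ≤ ρ ∧
      ∃ c ≠ b, c ∈ ChoiceSetOn 𝒟 f (t.raise (Pi.single b e)) := by
  simp only [ChoiceSetOn, Set.mem_ofPred_eq, not_forall] at hb
  obtain ⟨ε, hε, hmem, hne⟩ := hb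
  obtain ⟨e, he, heε⟩ := exists_pos_forall_lt hε
  refine ⟨min e ρ, lt_min he hρ, min_le_right _ _, _, hne,
    hp.mem_choiceSetOn_of_le hmem (hp.apply_mem_choiceSetOn hmem) (fun c i => ?_) ?_⟩
  · by_cases hc : c = b
    · subst hc
      simpa using (min_le_left e ρ).trans (heε i).le
    · simp [hc]
  · ext i
    simp [hne]

theorem notMem_choiceSetOn_of_le [Finite A] (hp : ImplementsOn 𝒟 f p) {s t : Profile n A}
    {a b : A} (hs : s ∈ 𝒟) (ht : t ∈ 𝒟) (hab : a ≠ b) (hle : s ≤ t) (hsa : s a = t a)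
    (ha : a ∈ ChoiceSetOn 𝒟 f t) (hb : b ∉ ChoiceSetOn 𝒟 f t) :
    b ∉ ChoiceSetOn 𝒟 f s := by
  intro hbs
  obtain ⟨ρ, hρ, htρ⟩ := exists_pos_raise_mem_intervalDom ht
  obtain ⟨e, he, heρ, c, hcb, hc⟩ := hp.exists_mem_choiceSetOn_raise_of_notMem hb hρ
  set y := t.raise (Pi.single b e)
  have hy : y ∈ 𝒟 := by
    refine Profile.raise_mem_intervalDom ht le_rfl htρ fun c => ⟨?_, ?_⟩ <;>
      simp only [Pi.single_apply] <;> split_ifs <;> linarith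
  set z := t.raise (Pi.single a (e / 8) + Pi.single b (e / 2))
  have hz : z ∈ 𝒟 := by
    refine Profile.raise_mem_intervalDom ht le_rfl htρ fun c => ⟨?_, ?_⟩ <;>
      simp only [Pi.add_apply, Pi.single_apply] <;> split_ifs <;> simp_all <;> linarith
  have hfz := hp.apply_mem_choiceSetOn hz
  by_cases hza : f z = a
  · refine hab (hp.eq_of_mem_choiceSetOn_of_favorsStrictly hz hs
      (w := s.raise (Pi.single a (e / 4) + Pi.single b (3 * e / 8)))
      (Profile.raise_mem_intervalDom hs hle htρ fun c => ⟨?_, ?_⟩) (hza ▸ hfz) hbs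
      (favorsStrictly_raise hle hsa fun c hc => ?_) (favorsStrictly_self_raise fun c hc => ?_))
    all_goals simp only [Pi.add_apply, Pi.single_apply]; split_ifs <;> simp_all <;> linarith
  by_cases hzb : f z = b
  · refine hcb (hp.eq_of_mem_choiceSetOn_of_favorsStrictly hy hz
      (w := t.raise (Pi.single a (e / 16) + Pi.single b (3 * e / 4) + Pi.single c (e / 8)))
      (Profile.raise_mem_intervalDom ht le_rfl htρ fun c => ⟨?_, ?_⟩) hc (hzb ▸ hfz)
      (favorsStrictly_raise le_rfl rfl fun c hc => ?_)
      (favorsStrictly_raise le_rfl rfl fun c hc => ?_))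
    all_goals simp only [Pi.add_apply, Pi.single_apply]; split_ifs <;> simp_all <;> linarith
  · refine hza (hp.eq_of_mem_choiceSetOn_of_favorsStrictly ht hz
      (w := t.raise (Pi.single a (e / 8) + Pi.single (f z) (e / 16)))
      (Profile.raise_mem_intervalDom ht le_rfl htρ fun c => ⟨?_, ?_⟩) ha hfz
      (favorsStrictly_self_raise fun c hc => ?_)
      (favorsStrictly_raise le_rfl rfl fun c hc => ?_)).symm
    all_goals simp only [Pi.add_apply, Pi.single_apply]; split_ifs <;> simp_all <;> linarith

end ImplementsOn

end BinaryIndependence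

theorem binary_independence_general
    {n : ℕ} {A : Type*} [Fintype A] [DecidableEq A]
    (α β : Fin n → EReal)
    (f : Profile n A → A)
    (hf : ImplementableOn (IntervalDom n A α β) f)
    (t s : Profile n A) (ht : t ∈ IntervalDom n A α β) (hs : s ∈ IntervalDom n A α β)
    (a b : A) (hab : a ≠ b) (hsa : s a = t a) (hsb : s b = t b) :
    ((a ∈ ChoiceSetOn (IntervalDom n A α β) f t ∧
        b ∈ ChoiceSetOn (IntervalDom n A α β) f t) →
      (a ∈ ChoiceSetOn (IntervalDom n A α β) f s ↔
        b ∈ ChoiceSetOn (IntervalDom n A α β) f s)) ∧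
    ((a ∈ ChoiceSetOn (IntervalDom n A α β) f t ∧
        b ∉ ChoiceSetOn (IntervalDom n A α β) f t) →
      b ∉ ChoiceSetOn (IntervalDom n A α β) f s) := by
  obtain ⟨p, hp⟩ := hf
  set u := t ⊓ s
  have hu : u ∈ IntervalDom n A α β := inf_mem_intervalDom ht hs
  have hua : u a = t a := by simp [u, hsa]
  have hub : u b = t b := by simp [u, hsb]
  have hut : u ≤ t := inf_le_left
  have hus : u ≤ s := inf_le_right
  refine ⟨fun ⟨hat, hbt⟩ => ⟨fun has => ?_, fun hbs => ?_⟩, fun ⟨hat, hbt⟩ hbs => ?_⟩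
  · by_contra hbs
    exact hp.notMem_choiceSetOn_of_le hu hs hab hus (hua.trans hsa.symm) has hbs
      (hp.mem_choiceSetOn_of_le ht hbt hut hub)
  · by_contra has
    exact hp.notMem_choiceSetOn_of_le hu hs hab.symm hus (hub.trans hsb.symm) hbs has
      (hp.mem_choiceSetOn_of_le ht hat hut hua)
  · exact hp.notMem_choiceSetOn_of_le hu ht hab hut hua hat hbt
      (hp.mem_choiceSetOn_of_le hs hbs hus (hub.trans hsb.symm))

/-- Binary Independence: if two profiles agree on the columns of
`a` and `b`, then (a) if `a,b ∈ C^f(t)` then `a ∈ C^f(s) ↔ b ∈ C^f(s)`, and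
(b) if `a ∈ C^f(t)` but `b ∉ C^f(t)` then `b ∉ C^f(s)`. -/
theorem binary_independence
    {n : ℕ} {A : Type*} [Fintype A] [DecidableEq A]
    (hn : 0 < n) (hA : 3 ≤ Fintype.card A)
    (α β : Fin n → EReal) (hαβ : ∀ i, α i < β i)
    (f : Profile n A → A)
    (hf : ImplementableOn (IntervalDom n A α β) f)
    (t s : Profile n A) (ht : t ∈ IntervalDom n A α β) (hs : s ∈ IntervalDom n A α β)
    (a b : A) (hab : a ≠ b) (hsa : s a = t a) (hsb : s b = t b) :
    ((a ∈ ChoiceSetOn (IntervalDom n A α β) f t ∧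
        b ∈ ChoiceSetOn (IntervalDom n A α β) f t) →
      (a ∈ ChoiceSetOn (IntervalDom n A α β) f s ↔
        b ∈ ChoiceSetOn (IntervalDom n A α β) f s)) ∧
    ((a ∈ ChoiceSetOn (IntervalDom n A α β) f t ∧
        b ∉ ChoiceSetOn (IntervalDom n A α β) f t) →
      b ∉ ChoiceSetOn (IntervalDom n A α β) f s) :=
  binary_independence_general α β f hf t s ht hs a b hab hsa hsb
end

section
/- (Axioms for the Social Welfare Ordering) Suppose each T_i is an m-dimensional open interval domain and f is an implementable and neutral social choice function. Then the induced social welfare ordering R^f on 𝔻 satisfies: weak Pareto (for all x, y ∈ 𝔻 with x ≫ y, x P^f y); invariance (for all x, y ∈ 𝔻 and z ∈ ℝⁿ with x+z, y+z ∈ 𝔻, x P^f y implies (x+z) P^f (y+z) and x I^f y implies (x+z) I^f (y+z)); and continuity (for every x ∈ 𝔻 the sets {y ∈ 𝔻 : y R^f x} and {y ∈ 𝔻 : x R^f y} are closed in 𝔻). -/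
open Function

/-!
Implementability yields weak monotonicity row by row: if `f t = a` and in every row the utility
of `a` rises strictly more than that of any other alternative, `f` still chooses `a`. With
neutrality, which forbids choosing an alternative dominated by another column, this shows that
`a` stays in the choice set when the other columns are lowered below `t a`. Hence `x R^f y`, and
whether it is strict, can be read off the choice set of one profile with columns `x` and `y` at
two fixed alternatives and a low vector everywhere else. Invariance then holds because
translating a profile does not change its choice set, and continuity because the choice
correspondence has a closed graph.
-/

open Filter Topology Set

theorem exists_perm_apply_eq_apply_eq {A : Type*} [DecidableEq A] {a b a₀ b₀ : A} (hab : a ≠ b)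
    (h₀ : a₀ ≠ b₀) : ∃ ρ : Equiv.Perm A, ρ a = a₀ ∧ ρ b = b₀ := by
  have hb : Equiv.swap a a₀ b ≠ a₀ := fun h =>
    hab ((Equiv.swap a a₀).injective (h.trans (Equiv.swap_apply_left a a₀).symm)).symm
  refine ⟨(Equiv.swap a a₀).trans (Equiv.swap (Equiv.swap a a₀ b) b₀), ?_, ?_⟩
  · rw [Equiv.trans_apply, Equiv.swap_apply_left, Equiv.swap_apply_of_ne_of_ne hb.symm h₀]
  · rw [Equiv.trans_apply, Equiv.swap_apply_left]

section Domain

variable {n : ℕ} {α β : Fin n → EReal}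

local notation "𝔻" => DSet α β

theorem isOpen_dSet : IsOpen 𝔻 := by
  have h𝔻 : 𝔻 = ⋂ i, (fun x : Fin n → ℝ => ((x i : ℝ) : EReal)) ⁻¹' Ioo (α i) (β i) := by
    ext x
    simp [DSet]
  rw [h𝔻]
  exact isOpen_iInter_of_finite fun i =>
    isOpen_Ioo.preimage (continuous_coe_real_ereal.comp (continuous_apply i))

theorem ordConnected_dSet : Set.OrdConnected 𝔻 :=
  ⟨fun _ hx _ hy _ hz i => ⟨(hx i).1.trans_le (EReal.coe_le_coe_iff.2 (hz.1 i)),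
    (EReal.coe_le_coe_iff.2 (hz.2 i)).trans_lt (hy i).2⟩⟩

theorem add_mem_dSet_of_le {x ε δ : Fin n → ℝ} (hx : x ∈ 𝔻) (hxε : x + ε ∈ 𝔻)
    (hδ : ∀ i, 0 ≤ δ i) (hδε : ∀ i, δ i ≤ ε i) : x + δ ∈ 𝔻 :=
  ordConnected_dSet.out hx hxε
    ⟨fun i => by simpa using hδ i, fun i => by simpa using hδε i⟩

theorem inf_mem_dSet {x y : Fin n → ℝ} (hx : x ∈ 𝔻) (hy : y ∈ 𝔻) : x ⊓ y ∈ 𝔻 := fun i => by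
  rcases le_total (x i) (y i) with h | h
  · simpa [inf_eq_left.2 h] using hx i
  · simpa [inf_eq_right.2 h] using hy i

theorem eventually_pos_add_smul_mem_dSet {x : Fin n → ℝ} (hx : x ∈ 𝔻) (u : Fin n → ℝ) :
    ∀ᶠ c in 𝓝[>] (0 : ℝ), 0 < c ∧ x + c • u ∈ 𝔻 := by
  have hc : Tendsto (fun c : ℝ => x + c • u) (𝓝 0) (𝓝 x) :=
    (by fun_prop : Continuous fun c : ℝ => x + c • u).tendsto' 0 x (by simp)
  exact eventually_mem_nhdsWithin.and (nhdsWithin_le_nhds (hc (isOpen_dSet.mem_nhds hx)))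

theorem exists_pos_lt_add_mem_dSet {x ε : Fin n → ℝ} (hx : x ∈ 𝔻) (hε : ∀ i, 0 < ε i) :
    ∃ δ : Fin n → ℝ, (∀ i, 0 < δ i) ∧ (∀ i, δ i < ε i) ∧ x + δ ∈ 𝔻 := by
  obtain ⟨c, ⟨hc0, hxc⟩, hc1⟩ := ((eventually_pos_add_smul_mem_dSet hx ε).and
    (nhdsWithin_le_nhds (eventually_lt_nhds one_pos))).exists
  exact ⟨c • ε, fun i => mul_pos hc0 (hε i),
    fun i => by simpa using mul_lt_of_lt_one_left (hε i) hc1, hxc⟩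

theorem exists_lt_of_add_mem_dSet {x y z : Fin n → ℝ} (hx : x ∈ 𝔻) (hy : y ∈ 𝔻)
    (hxz : x + z ∈ 𝔻) (hyz : y + z ∈ 𝔻) :
    ∃ v ∈ 𝔻, v + z ∈ 𝔻 ∧ (∀ i, v i < x i) ∧ (∀ i, v i < y i) := by
  have hw := inf_mem_dSet hx hy
  have hwz : x ⊓ y + z ∈ 𝔻 := by simpa only [inf_add] using inf_mem_dSet hxz hyz
  obtain ⟨c, ⟨hc, hv⟩, -, hvz⟩ := ((eventually_pos_add_smul_mem_dSet hw (-1)).and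
    (eventually_pos_add_smul_mem_dSet hwz (-1))).exists
  refine ⟨x ⊓ y + c • (-1), hv, by rwa [add_right_comm], fun i => ?_, fun i => ?_⟩ <;>
    simp only [Pi.add_apply, Pi.inf_apply, Pi.smul_apply, Pi.neg_apply, Pi.one_apply, smul_eq_mul,
      mul_neg, mul_one] <;>
    linarith [inf_le_left (a := x i) (b := y i), inf_le_right (a := x i) (b := y i)]

theorem exists_lt_of_mem_dSet {x y : Fin n → ℝ} (hx : x ∈ 𝔻) (hy : y ∈ 𝔻) :
    ∃ v ∈ 𝔻, (∀ i, v i < x i) ∧ (∀ i, v i < y i) := by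
  obtain ⟨v, hv, -, hvx, hvy⟩ :=
    exists_lt_of_add_mem_dSet (z := 0) hx hy (by rwa [add_zero]) (by rwa [add_zero])
  exact ⟨v, hv, hvx, hvy⟩

theorem eventually_forall_lt_coe {v : Fin n → ℝ} {y₀ : 𝔻} (h : ∀ i, v i < (y₀ : Fin n → ℝ) i) :
    ∀ᶠ y : 𝔻 in 𝓝 y₀, ∀ i, v i < (y : Fin n → ℝ) i :=
  eventually_all.2 fun i =>
    (((continuous_apply i).comp continuous_subtype_val).tendsto y₀).eventually (lt_mem_nhds (h i))

end Domain

section ChoiceSet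

variable {n : ℕ} {A : Type*} {α β : Fin n → EReal} {f : Profile n A → A}
  {p : Profile n A → Fin n → ℝ} {t s : Profile n A} {a b c a₀ b₀ : A} {x y v : Fin n → ℝ}

local notation "𝔻" => DSet α β
local notation "𝒟" => IntervalDom n A α β
local notation "𝒞" => ChoiceSetOn (IntervalDom n A α β) f

theorem mem_intervalDom_iff : t ∈ 𝒟 ↔ ∀ a, t a ∈ 𝔻 :=
  Iff.rfl

theorem ImplementsOn.apply_eq_of_row_sub_lt {Dom : Set (Profile n A)} (hp : ImplementsOn Dom f p)
    (ht : t ∈ Dom) (hs : s ∈ Dom) {i : Fin n} (hrow : ∀ j ≠ i, ∀ b, s b j = t b j) (hft : f t = a)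
    (h : ∀ b ≠ a, s b i - t b i < s a i - t a i) : f s = a := by
  by_contra hne
  have hts := hp t ht s hs i hrow
  have hst := hp s hs t ht i fun j hj b => (hrow j hj b).symm
  have := h (f s) hne
  subst hft
  linarith

/-- Change the rows one agent at a time; each step is weak monotonicity. -/
theorem ImplementsOn.apply_eq_of_forall_sub_lt (hp : ImplementsOn 𝒟 f p) (ht : t ∈ 𝒟)
    (hs : s ∈ 𝒟) (hft : f t = a) (h : ∀ i, ∀ b ≠ a, s b i - t b i < s a i - t a i) :
    f s = a := by
  let mix : Finset (Fin n) → Profile n A := fun S b => S.piecewise (s b) (t b)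
  have hmix : ∀ S, mix S ∈ 𝒟 := fun S b i => by
    by_cases hi : i ∈ S
    · simpa [mix, hi] using hs b i
    · simpa [mix, hi] using ht b i
  have key : ∀ S, f (mix S) = a := by
    intro S
    induction S using Finset.induction_on with
    | empty => simpa [mix] using hft
    | insert j S hj ih =>
      refine hp.apply_eq_of_row_sub_lt (hmix S) (hmix _) (i := j) (fun k hk b => ?_) ih
        fun b hb => ?_
      · simp [mix, Finset.piecewise_insert, update_of_ne hk]
      · simpa [mix, Finset.piecewise_insert, hj] using h j b hb
  simpa [mix] using key Finset.univ

variable [DecidableEq A]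

theorem update_mem_intervalDom (ht : t ∈ 𝒟) (c : A) (hv : v ∈ 𝔻) : update t c v ∈ 𝒟 :=
  mem_intervalDom_iff.2 fun b => by
    rcases eq_or_ne b c with rfl | hb
    · simpa using hv
    · simpa [update_of_ne hb] using mem_intervalDom_iff.1 ht b

def pairProfile (a b : A) (x y v : Fin n → ℝ) : Profile n A :=
  update (update (fun _ => v) b y) a x

@[simp]
theorem pairProfile_left : pairProfile a b x y v a = x :=
  update_self ..

theorem pairProfile_right (hab : a ≠ b) : pairProfile a b x y v b = y := by
  simp [pairProfile, update_of_ne hab.symm]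

theorem pairProfile_of_ne (hca : c ≠ a) (hcb : c ≠ b) : pairProfile a b x y v c = v := by
  simp [pairProfile, update_of_ne hca, update_of_ne hcb]

theorem pairProfile_comm (hab : a ≠ b) : pairProfile a b x y v = pairProfile b a y x v :=
  (update_comm hab ..).symm

theorem pairProfile_update_right (hab : a ≠ b) (y' : Fin n → ℝ) :
    update (pairProfile a b x y v) b y' = pairProfile a b x y' v := by
  simp only [pairProfile, update_comm hab.symm, update_idem]

theorem pairProfile_mem (hx : x ∈ 𝔻) (hy : y ∈ 𝔻) (hv : v ∈ 𝔻) : pairProfile a b x y v ∈ 𝒟 :=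
  update_mem_intervalDom (update_mem_intervalDom (fun _ => hv) b hy) a hx

theorem pairProfile_perm (ρ : Equiv.Perm A) :
    (fun c => pairProfile a b x y v (ρ.symm c)) = pairProfile (ρ a) (ρ b) x y v := by
  funext c
  simp only [pairProfile, update_apply, ρ.symm_apply_eq]

theorem pairProfile_add (z : Fin n → ℝ) :
    (fun c => pairProfile a b x y v c + z) = pairProfile a b (x + z) (y + z) (v + z) := by
  funext c
  simp only [pairProfile, update_apply]
  split_ifs <;> rfl

theorem ImplementsOn.apply_mem_choiceSet (hp : ImplementsOn 𝒟 f p) (ht : t ∈ 𝒟) :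
    f t ∈ 𝒞 t :=
  fun ε hε hu => hp.apply_eq_of_forall_sub_lt ht hu rfl fun i b hb => by
    simp [update_of_ne hb, hε i]

theorem ImplementsOn.apply_eq_of_mem_choiceSet (hp : ImplementsOn 𝒟 f p) (ht : t ∈ 𝒟)
    (ha : a ∈ 𝒞 t) {δ : Fin n → ℝ} (hδ : ∀ i, 0 < δ i) (htδ : t a + δ ∈ 𝔻) (hs : s ∈ 𝒟)
    (h : ∀ i, ∀ b ≠ a, s b i - t b i < s a i - t a i - δ i) : f s = a := by
  have hu := update_mem_intervalDom ht a htδ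
  refine hp.apply_eq_of_forall_sub_lt hu hs (ha δ hδ hu) fun i b hb => ?_
  simpa [update_of_ne hb, sub_sub] using h i b hb

theorem ImplementsOn.mem_choiceSet_of_le (hp : ImplementsOn 𝒟 f p) (ht : t ∈ 𝒟)
    (ha : a ∈ 𝒞 t) (hst : s ≤ t) (hsa : s a = t a) : a ∈ 𝒞 s := by
  intro ε hε hu
  have hδ : ∀ i, 0 < ε i / 2 := fun i => half_pos (hε i)
  refine hp.apply_eq_of_mem_choiceSet ht ha hδ ?_ hu fun i b hb => ?_
  · exact add_mem_dSet_of_le (ht a) (by simpa [hsa] using mem_intervalDom_iff.1 hu a)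
      (fun i => (hδ i).le) fun i => half_le_self (hε i).le
  · simp only [update_of_ne hb, update_self, hsa, Pi.add_apply]
    linarith [hst b i, hε i]

theorem ImplementsOn.eq_of_mem_choiceSet_update_add (hp : ImplementsOn 𝒟 f p) (ht : t ∈ 𝒟)
    (ha : a ∈ 𝒞 t) {ε : Fin n → ℝ} (hε : ∀ i, 0 < ε i) (hu : update t a (t a + ε) ∈ 𝒟)
    {d : A} (hd : d ∈ 𝒞 (update t a (t a + ε))) : d = a := by
  by_contra hda
  have hhalf : ∀ i, 0 < ε i / 2 := fun i => half_pos (hε i)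
  obtain ⟨δ, hδ, hδε, htδ⟩ := exists_pos_lt_add_mem_dSet (ht d) hhalf
  have hud : update t a (t a + ε) d = t d := update_of_ne hda ..
  have hw := update_mem_intervalDom hu d (hud ▸ htδ : update t a (t a + ε) d + δ ∈ 𝔻)
  refine hda ((hd δ hδ hw).symm.trans (hp.apply_eq_of_mem_choiceSet ht ha hhalf ?_ hw
    fun i b hb => ?_))
  · exact add_mem_dSet_of_le (ht a) (by simpa using mem_intervalDom_iff.1 hu a)
      (fun i => (hhalf i).le) fun i => by linarith [hε i]
  · rcases eq_or_ne b d with rfl | hbd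
    · simp only [update_self, hud, update_of_ne (Ne.symm hda), Pi.add_apply]
      linarith [hδε i]
    · simp only [update_of_ne hbd, update_of_ne hb, update_of_ne (Ne.symm hda), update_self,
        Pi.add_apply]
      linarith [hε i]

theorem ImplementsOn.mem_choiceSet_add (hp : ImplementsOn 𝒟 f p) (ht : t ∈ 𝒟) (z : Fin n → ℝ)
    (ha : a ∈ 𝒞 t) : a ∈ 𝒞 (fun c => t c + z) := by
  intro ε hε hu
  obtain ⟨δ, hδ, hδε, htδ⟩ := exists_pos_lt_add_mem_dSet (ht a) hε
  refine hp.apply_eq_of_mem_choiceSet ht ha hδ htδ hu fun i b hb => ?_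
  simp only [update_of_ne hb, update_self, Pi.add_apply]
  linarith [hδε i]

theorem ImplementsOn.mem_choiceSet_add_iff (hp : ImplementsOn 𝒟 f p) (ht : t ∈ 𝒟)
    {z : Fin n → ℝ} (htz : (fun c => t c + z) ∈ 𝒟) : a ∈ 𝒞 (fun c => t c + z) ↔ a ∈ 𝒞 t := by
  refine ⟨fun ha => ?_, hp.mem_choiceSet_add ht z⟩
  simpa using hp.mem_choiceSet_add htz (-z) ha

theorem ImplementsOn.exists_mem_choiceSet_update_add (hp : ImplementsOn 𝒟 f p) (ht : t ∈ 𝒟)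
    (ha : a ∈ 𝒞 t) (hb : b ∉ 𝒞 t) (hab : a ≠ b) :
    ∃ δ : Fin n → ℝ, (∀ i, 0 < δ i) ∧ update t b (t b + δ) ∈ 𝒟 ∧
      a ∈ 𝒞 (update t b (t b + δ)) := by
  simp only [ChoiceSetOn, mem_ofPred_eq, not_forall] at hb
  obtain ⟨ε, hε, hu, hfb⟩ := hb
  set δ : Fin n → ℝ := fun i => ε i / 2
  have hδ : ∀ i, 0 < δ i := fun i => half_pos (hε i)
  have hδδ : t b + δ + δ = t b + ε := by ext i; simp only [Pi.add_apply, δ]; ring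
  set t' := update t b (t b + δ)
  have ht' : t' ∈ 𝒟 := update_mem_intervalDom ht b <| add_mem_dSet_of_le (ht b)
    (by simpa using mem_intervalDom_iff.1 hu b) (fun i => (hδ i).le) fun i => half_le_self (hε i).le
  have ht'a : t' a = t a := update_of_ne hab ..
  refine ⟨δ, hδ, ht', fun η hη hw => ?_⟩
  set w := update t' a (t' a + η)
  by_contra hne
  have he := hp.apply_mem_choiceSet hw
  by_cases heb : f w = b
  · -- lowering `a` back puts `b` into the choice set at `t'`; raising `b` by `δ` once more
    -- then reaches the profile of `ε`, where `b` is not chosen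
    have hbt' : b ∈ 𝒞 t' := hp.mem_choiceSet_of_le hw (heb ▸ he)
      (le_update_iff.2 ⟨le_add_of_nonneg_right fun i => (hη i).le, fun _ _ => le_rfl⟩)
      (update_of_ne hab.symm ..).symm
    refine hfb ?_
    have := hbt' δ hδ (by simpa [t', hδδ] using hu)
    simpa [t', hδδ] using this
  · -- lowering `b` back puts `f w` into the choice set of a profile where only `a` can be
    have hs := update_mem_intervalDom ht a (by simpa [w, ht'a] using mem_intervalDom_iff.1 hw a)
    have hsw : update t a (t a + η) ≤ w := fun c i => by
      rcases eq_or_ne c a with rfl | hca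
      · simp [w, ht'a]
      · rcases eq_or_ne c b with rfl | hcb
        · simp [w, t', update_of_ne hca, (hδ i).le]
        · simp [w, t', update_of_ne hca, update_of_ne hcb]
    have hsw' : update t a (t a + η) (f w) = w (f w) := by
      simp [w, t', update_of_ne hne, update_of_ne heb]
    exact hne (hp.eq_of_mem_choiceSet_update_add ht ha hη hs
      (hp.mem_choiceSet_of_le hw he hsw hsw'))

theorem ImplementsOn.mem_choiceSet_of_mem_closure [Finite A] (hp : ImplementsOn 𝒟 f p)
    (h : s ∈ closure {t | t ∈ 𝒟 ∧ a ∈ 𝒞 t}) : a ∈ 𝒞 s := by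
  intro ε hε hu
  have hnear : ∀ᶠ t in 𝓝 s, ∀ b i, |t b i - s b i| < ε i / 4 :=
    eventually_all.2 fun b => eventually_all.2 fun i => by
      simpa [Real.dist_eq] using Metric.tendsto_nhds.1
        (((continuous_apply i).comp (continuous_apply b)).tendsto s) (ε i / 4)
        (by linarith [hε i])
  obtain ⟨t, hts, ht, ha⟩ := (hnear.and_frequently (mem_closure_iff_frequently.1 h)).exists
  have hsa : s a + ε ∈ 𝔻 := by simpa using mem_intervalDom_iff.1 hu a
  refine hp.apply_eq_of_mem_choiceSet ht ha (δ := fun i => ε i / 2) (fun i => half_pos (hε i))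
    (ordConnected_dSet.out (ht a) hsa ⟨fun i => ?_, fun i => ?_⟩) hu fun i b hb => ?_
  · simp only [Pi.add_apply]
    linarith [hε i]
  · simp only [Pi.add_apply]
    linarith [hε i, abs_lt.1 (hts a i)]
  · simp only [update_of_ne hb, update_self, Pi.add_apply]
    linarith [hε i, abs_lt.1 (hts a i), abs_lt.1 (hts b i)]

theorem ImplementsOn.isClosed_of_locally_mem_choiceSet [Finite A] {X : Type*}
    [TopologicalSpace X] (hp : ImplementsOn 𝒟 f p) {P : X → Prop} (a : A)
    (h : ∀ x₀, ∃ g : X → Profile n A, ContinuousAt g x₀ ∧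
      ∀ᶠ x in 𝓝 x₀, g x ∈ 𝒟 ∧ (P x ↔ a ∈ 𝒞 (g x))) :
    IsClosed {x | P x} := by
  refine isClosed_iff_clusterPt.2 fun x₀ hx₀ => ?_
  obtain ⟨g, hg, hloc⟩ := h x₀
  have : (𝓝[{x | P x}] x₀).NeBot := hx₀
  refine hloc.self_of_nhds.2.2 (hp.mem_choiceSet_of_mem_closure
    (mem_closure_of_tendsto (b := 𝓝[{x | P x}] x₀) (hg.tendsto.mono_left nhdsWithin_le_nhds) ?_))
  filter_upwards [nhdsWithin_le_nhds hloc, self_mem_nhdsWithin] with x hx hPx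
  exact ⟨hx.1, hx.2.1 hPx⟩

/-- Raising column `c` of `t` to `t a` gives the same profile as raising column `a` to `t a` after
the labels `a` and `c` are swapped; `f` would have to choose both `c` and `a` there. -/
theorem NeutralOn.notMem_choiceSet_of_lt (hneu : NeutralOn 𝒟 f) (ht : t ∈ 𝒟) (hac : a ≠ c)
    (hlt : ∀ i, t c i < t a i) : c ∉ 𝒞 t := by
  intro hc
  have hgap : ∀ i, 0 < (t a - t c) i := fun i => sub_pos.2 (hlt i)
  have hu : update t c (t c + (t a - t c)) ∈ 𝒟 := by
    simpa using update_mem_intervalDom ht c (ht a)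
  let s : Profile n A := fun b => t ((Equiv.swap a c).symm b)
  have has : a ∈ 𝒞 s := by
    rw [hneu t ht]
    exact ⟨c, hc, Equiv.swap_apply_right a c⟩
  have hsu : update s a (s a + (t a - t c)) = update t c (t c + (t a - t c)) := by
    funext b
    rcases eq_or_ne b a with rfl | hba
    · simp [s, update_of_ne hac]
    · rcases eq_or_ne b c with rfl | hbc
      · simp [s, update_of_ne hba]
      · simp [s, update_of_ne hba, update_of_ne hbc, Equiv.swap_apply_of_ne_of_ne hba hbc]
  refine hac ((has _ hgap (hsu ▸ hu)).symm.trans ?_)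
  rw [hsu]
  exact hc _ hgap hu

/-- If `f` chose `e ≠ a` after `a` is raised, then `e ≠ c` by `notMem_choiceSet_of_lt`, and
lowering column `c` to `v ⊓ t c` would keep `e` in the choice set of a profile where only `a`
can be. -/
theorem mem_choiceSet_update_of_lt (hp : ImplementsOn 𝒟 f p) (hneu : NeutralOn 𝒟 f)
    (ht : t ∈ 𝒟) (ha : a ∈ 𝒞 t) (hca : c ≠ a) (hv : v ∈ 𝔻)
    (hva : ∀ i, v i < t a i) : a ∈ 𝒞 (update t c v) := by
  intro ε hε hu
  set u := update (update t c v) a (update t c v a + ε)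
  have hua : u a = t a + ε := by simp [u, update_of_ne hca.symm]
  have huc : u c = v := by simp [u, update_of_ne hca]
  by_contra hne
  have he := hp.apply_mem_choiceSet hu
  have hec : f u ≠ c := by
    intro hfc
    refine hneu.notMem_choiceSet_of_lt hu hca.symm (fun i => ?_) (hfc ▸ he)
    rw [huc, hua, Pi.add_apply]
    linarith [hva i, hε i]
  have hw := inf_mem_dSet hv (ht c)
  have hta : a ∈ 𝒞 (update t c (v ⊓ t c)) :=
    hp.mem_choiceSet_of_le ht ha (update_le_iff.2 ⟨inf_le_right, fun _ _ => le_rfl⟩)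
      (update_of_ne hca.symm ..)
  have hue : f u ∈ 𝒞 (update u c (v ⊓ t c)) :=
    hp.mem_choiceSet_of_le hu he (update_le_iff.2 ⟨huc ▸ inf_le_left, fun _ _ => le_rfl⟩)
      (update_of_ne hec ..)
  have hsame : update u c (v ⊓ t c) =
      update (update t c (v ⊓ t c)) a (update t c (v ⊓ t c) a + ε) := by
    simp only [u, update_of_ne hca.symm, update_comm hca, update_idem]
  rw [hsame] at hue
  exact hne (hp.eq_of_mem_choiceSet_update_add (update_mem_intervalDom ht c hw) hta hε
    (hsame ▸ update_mem_intervalDom hu c hw) hue)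

theorem mem_choiceSet_of_eq_or_lt [Fintype A] (hp : ImplementsOn 𝒟 f p) (hneu : NeutralOn 𝒟 f)
    (ht : t ∈ 𝒟) (hs : s ∈ 𝒟) (ha : a ∈ 𝒞 t) (hsa : s a = t a)
    (hlt : ∀ c, s c ≠ t c → ∀ i, s c i < t a i) : a ∈ 𝒞 s := by
  suffices ∀ S : Finset A, ∀ s ∈ 𝒟, s a = t a → (∀ c ∉ S, s c = t c) →
      (∀ c, s c ≠ t c → ∀ i, s c i < t a i) → a ∈ 𝒞 s from
    this Finset.univ s hs hsa (by simp) hlt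
  intro S
  induction S using Finset.induction_on with
  | empty =>
    intro s _ _ hout _
    rwa [funext fun c => hout c (Finset.notMem_empty c)]
  | insert c S hc ih =>
    intro s hs hsa hout hlt
    have hmid : a ∈ 𝒞 (update s c (t c)) := by
      refine ih _ (update_mem_intervalDom hs c (ht c)) ?_ (fun b hb => ?_) (fun b hb => ?_)
      · rcases eq_or_ne a c with rfl | hac
        · simp
        · simp [update_of_ne hac, hsa]
      · rcases eq_or_ne b c with rfl | hbc
        · simp
        · simpa [update_of_ne hbc] using hout b (by simp [hbc, hb])
      · rcases eq_or_ne b c with rfl | hbc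
        · simp at hb
        · simp only [update_of_ne hbc] at hb ⊢
          exact hlt b hb
    by_cases hsc : s c = t c
    · rwa [update_eq_self_iff.2 hsc.symm] at hmid
    · have hca : c ≠ a := fun h => hsc (h ▸ hsa)
      have := mem_choiceSet_update_of_lt hp hneu (update_mem_intervalDom hs c (ht c)) hmid hca
        (hs c) (by simpa [update_of_ne hca.symm, hsa] using hlt c hsc)
      simpa using this

theorem NeutralOn.perm_mem_choiceSet_pairProfile_iff (hneu : NeutralOn 𝒟 f) (hx : x ∈ 𝔻)
    (hy : y ∈ 𝔻) (hv : v ∈ 𝔻) (ρ : Equiv.Perm A) :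
    ρ c ∈ 𝒞 (pairProfile (ρ a) (ρ b) x y v) ↔ c ∈ 𝒞 (pairProfile a b x y v) := by
  rw [← pairProfile_perm, hneu _ (pairProfile_mem hx hy hv), ρ.injective.mem_set_image]

theorem mem_choiceSet_pairProfile [Fintype A] (hp : ImplementsOn 𝒟 f p) (hneu : NeutralOn 𝒟 f)
    (ht : t ∈ 𝒟) (ha : a ∈ 𝒞 t) (hab : a ≠ b) (hv : v ∈ 𝔻) (hva : ∀ i, v i < t a i) :
    a ∈ 𝒞 (pairProfile a b (t a) (t b) v) := by
  refine mem_choiceSet_of_eq_or_lt hp hneu ht (pairProfile_mem (ht a) (ht b) hv) ha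
    pairProfile_left fun c hc => ?_
  rcases eq_or_ne c a with rfl | hca
  · simp at hc
  rcases eq_or_ne c b with rfl | hcb
  · simp [pairProfile_right hab] at hc
  simpa [pairProfile_of_ne hca hcb] using hva

theorem notMem_choiceSet_pairProfile [Fintype A] (hp : ImplementsOn 𝒟 f p)
    (hneu : NeutralOn 𝒟 f) (ht : t ∈ 𝒟) (ha : a ∈ 𝒞 t) (hb : b ∉ 𝒞 t) (hab : a ≠ b)
    (hv : v ∈ 𝔻) (hva : ∀ i, v i < t a i) : b ∉ 𝒞 (pairProfile a b (t a) (t b) v) := by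
  intro hbT
  obtain ⟨δ, hδ, ht', ha'⟩ := hp.exists_mem_choiceSet_update_add ht ha hb hab
  have := mem_choiceSet_pairProfile hp hneu ht' ha' hab hv (by simpa [update_of_ne hab] using hva)
  have hP : update (pairProfile a b (t a) (t b) v) b (pairProfile a b (t a) (t b) v b + δ) =
      pairProfile a (b := b) (update t b (t b + δ) a) (update t b (t b + δ) b) v := by
    rw [pairProfile_right hab, pairProfile_update_right hab, update_self, update_of_ne hab]
  rw [← hP] at this
  exact hab (hp.eq_of_mem_choiceSet_update_add (pairProfile_mem (ht a) (ht b) hv) hbT hδ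
    (hP ▸ pairProfile_mem (ht' a) (ht' b) hv) this)

theorem prel_iff [Fintype A] (hp : ImplementsOn 𝒟 f p) (hneu : NeutralOn 𝒟 f) (h₀ : a₀ ≠ b₀)
    (hx : x ∈ 𝔻) (hy : y ∈ 𝔻) (hv : v ∈ 𝔻) (hvx : ∀ i, v i < x i) :
    PRel 𝒟 f x y ↔ a₀ ∈ 𝒞 (pairProfile a₀ b₀ x y v) ∧ b₀ ∉ 𝒞 (pairProfile a₀ b₀ x y v) := by
  constructor
  · rintro ⟨t, ht, a, b, hab, rfl, rfl, ha, hb⟩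
    obtain ⟨ρ, rfl, rfl⟩ := exists_perm_apply_eq_apply_eq hab h₀
    rw [hneu.perm_mem_choiceSet_pairProfile_iff hx hy hv,
      hneu.perm_mem_choiceSet_pairProfile_iff hx hy hv]
    exact ⟨mem_choiceSet_pairProfile hp hneu ht ha hab hv hvx,
      notMem_choiceSet_pairProfile hp hneu ht ha hb hab hv hvx⟩
  · rintro ⟨ha, hb⟩
    exact ⟨_, pairProfile_mem hx hy hv, a₀, b₀, h₀, pairProfile_left, pairProfile_right h₀, ha, hb⟩

theorem irel_iff [Fintype A] (hp : ImplementsOn 𝒟 f p) (hneu : NeutralOn 𝒟 f) (h₀ : a₀ ≠ b₀)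
    (hx : x ∈ 𝔻) (hy : y ∈ 𝔻) (hv : v ∈ 𝔻) (hvx : ∀ i, v i < x i) (hvy : ∀ i, v i < y i) :
    IRel 𝒟 f x y ↔ a₀ ∈ 𝒞 (pairProfile a₀ b₀ x y v) ∧ b₀ ∈ 𝒞 (pairProfile a₀ b₀ x y v) := by
  constructor
  · rintro ⟨t, ht, a, b, hab, rfl, rfl, ha, hb⟩
    obtain ⟨ρ, rfl, rfl⟩ := exists_perm_apply_eq_apply_eq hab h₀
    rw [hneu.perm_mem_choiceSet_pairProfile_iff hx hy hv,
      hneu.perm_mem_choiceSet_pairProfile_iff hx hy hv]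
    refine ⟨mem_choiceSet_pairProfile hp hneu ht ha hab hv hvx, ?_⟩
    rw [pairProfile_comm hab]
    exact mem_choiceSet_pairProfile hp hneu ht hb hab.symm hv hvy
  · rintro ⟨ha, hb⟩
    exact ⟨_, pairProfile_mem hx hy hv, a₀, b₀, h₀, pairProfile_left, pairProfile_right h₀, ha, hb⟩

theorem rrel_iff [Fintype A] (hp : ImplementsOn 𝒟 f p) (hneu : NeutralOn 𝒟 f) (h₀ : a₀ ≠ b₀)
    (hx : x ∈ 𝔻) (hy : y ∈ 𝔻) (hv : v ∈ 𝔻) (hvx : ∀ i, v i < x i) (hvy : ∀ i, v i < y i) :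
    RRel 𝒟 f x y ↔ a₀ ∈ 𝒞 (pairProfile a₀ b₀ x y v) := by
  rw [RRel, prel_iff hp hneu h₀ hx hy hv hvx, irel_iff hp hneu h₀ hx hy hv hvx hvy]
  tauto

theorem prel_of_forall_lt [Nontrivial A] (hp : ImplementsOn 𝒟 f p) (hneu : NeutralOn 𝒟 f)
    (hx : x ∈ 𝔻) (hy : y ∈ 𝔻) (hyx : ∀ i, y i < x i) : PRel 𝒟 f x y := by
  obtain ⟨a₀, b₀, h₀⟩ := exists_pair_ne A
  set Q := pairProfile a₀ b₀ x y y
  have hQ : Q ∈ 𝒟 := pairProfile_mem hx hy hy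
  have hQy : ∀ c ≠ a₀, Q c = y := fun c hc => by
    rcases eq_or_ne c b₀ with rfl | hcb
    · exact pairProfile_right h₀
    · exact pairProfile_of_ne hc hcb
  have hnot : ∀ c ≠ a₀, c ∉ 𝒞 Q := fun c hc =>
    hneu.notMem_choiceSet_of_lt hQ hc.symm (by simpa [Q, hQy c hc] using hyx)
  have hfQ : f Q = a₀ := by
    by_contra h
    exact hnot _ h (hp.apply_mem_choiceSet hQ)
  exact ⟨Q, hQ, a₀, b₀, h₀, pairProfile_left, hQy b₀ h₀.symm, hfQ ▸ hp.apply_mem_choiceSet hQ,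
    hnot b₀ h₀.symm⟩

theorem choiceSet_pairProfile_add (hp : ImplementsOn 𝒟 f p) {z : Fin n → ℝ}
    (hx : x ∈ 𝔻) (hy : y ∈ 𝔻) (hv : v ∈ 𝔻) (hxz : x + z ∈ 𝔻) (hyz : y + z ∈ 𝔻)
    (hvz : v + z ∈ 𝔻) :
    𝒞 (pairProfile a b (x + z) (y + z) (v + z)) = 𝒞 (pairProfile a b x y v) := by
  ext c
  rw [← pairProfile_add]
  exact hp.mem_choiceSet_add_iff (pairProfile_mem hx hy hv)
    ((pairProfile_add (a := a) (b := b) z).symm ▸ pairProfile_mem hxz hyz hvz)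

theorem prel_add [Fintype A] [Nontrivial A] (hp : ImplementsOn 𝒟 f p) (hneu : NeutralOn 𝒟 f)
    {z : Fin n → ℝ} (hx : x ∈ 𝔻) (hy : y ∈ 𝔻) (hxz : x + z ∈ 𝔻) (hyz : y + z ∈ 𝔻)
    (h : PRel 𝒟 f x y) : PRel 𝒟 f (x + z) (y + z) := by
  obtain ⟨a₀, b₀, h₀⟩ := exists_pair_ne A
  obtain ⟨v, hv, hvz, hvx, -⟩ := exists_lt_of_add_mem_dSet hx hy hxz hyz
  rw [prel_iff hp hneu h₀ hx hy hv hvx] at h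
  rwa [prel_iff hp hneu h₀ hxz hyz hvz (fun i => by simpa using hvx i),
    choiceSet_pairProfile_add hp hx hy hv hxz hyz hvz]

theorem irel_add [Fintype A] [Nontrivial A] (hp : ImplementsOn 𝒟 f p) (hneu : NeutralOn 𝒟 f)
    {z : Fin n → ℝ} (hx : x ∈ 𝔻) (hy : y ∈ 𝔻) (hxz : x + z ∈ 𝔻) (hyz : y + z ∈ 𝔻)
    (h : IRel 𝒟 f x y) : IRel 𝒟 f (x + z) (y + z) := by
  obtain ⟨a₀, b₀, h₀⟩ := exists_pair_ne A
  obtain ⟨v, hv, hvz, hvx, hvy⟩ := exists_lt_of_add_mem_dSet hx hy hxz hyz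
  rw [irel_iff hp hneu h₀ hx hy hv hvx hvy] at h
  rwa [irel_iff hp hneu h₀ hxz hyz hvz (fun i => by simpa using hvx i)
    (fun i => by simpa using hvy i), choiceSet_pairProfile_add hp hx hy hv hxz hyz hvz]

theorem isClosed_setOf_rrel_left [Fintype A] [Nontrivial A] (hp : ImplementsOn 𝒟 f p)
    (hneu : NeutralOn 𝒟 f) (hx : x ∈ 𝔻) : IsClosed {y : 𝔻 | RRel 𝒟 f y x} := by
  obtain ⟨a₀, b₀, h₀⟩ := exists_pair_ne A
  refine hp.isClosed_of_locally_mem_choiceSet a₀ fun y₀ => ?_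
  obtain ⟨v, hv, hvy, hvx⟩ := exists_lt_of_mem_dSet y₀.2 hx
  refine ⟨fun y => pairProfile a₀ b₀ y x v, by unfold pairProfile; fun_prop, ?_⟩
  filter_upwards [eventually_forall_lt_coe hvy] with y hy
  exact ⟨pairProfile_mem y.2 hx hv, rrel_iff hp hneu h₀ y.2 hx hv hy hvx⟩

theorem isClosed_setOf_rrel_right [Fintype A] [Nontrivial A] (hp : ImplementsOn 𝒟 f p)
    (hneu : NeutralOn 𝒟 f) (hx : x ∈ 𝔻) : IsClosed {y : 𝔻 | RRel 𝒟 f x y} := by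
  obtain ⟨a₀, b₀, h₀⟩ := exists_pair_ne A
  refine hp.isClosed_of_locally_mem_choiceSet a₀ fun y₀ => ?_
  obtain ⟨v, hv, hvy, hvx⟩ := exists_lt_of_mem_dSet y₀.2 hx
  refine ⟨fun y => pairProfile a₀ b₀ x y v, by unfold pairProfile; fun_prop, ?_⟩
  filter_upwards [eventually_forall_lt_coe hvy] with y hy
  exact ⟨pairProfile_mem hx y.2 hv, rrel_iff hp hneu h₀ hx y.2 hv hvx hy⟩

end ChoiceSet

theorem induced_ordering_axioms_general
    {n : ℕ} {A : Type*} [Fintype A] [DecidableEq A]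
    (hA : 3 ≤ Fintype.card A)
    (α β : Fin n → EReal)
    (f : Profile n A → A)
    (hf : ImplementableOn (IntervalDom n A α β) f)
    (hneu : NeutralOn (IntervalDom n A α β) f) :
    (∀ x ∈ DSet α β, ∀ y ∈ DSet α β, (∀ i, y i < x i) →
      PRel (IntervalDom n A α β) f x y) ∧
    (∀ x ∈ DSet α β, ∀ y ∈ DSet α β, ∀ z : Fin n → ℝ,
      x + z ∈ DSet α β → y + z ∈ DSet α β →
      (PRel (IntervalDom n A α β) f x y → PRel (IntervalDom n A α β) f (x + z) (y + z)) ∧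
      (IRel (IntervalDom n A α β) f x y → IRel (IntervalDom n A α β) f (x + z) (y + z))) ∧
    (∀ x ∈ DSet α β,
      IsClosed {y : ↥(DSet α β) | RRel (IntervalDom n A α β) f ↑y x} ∧
      IsClosed {y : ↥(DSet α β) | RRel (IntervalDom n A α β) f x ↑y}) := by
  obtain ⟨p, hp⟩ := hf
  have : Nontrivial A := Fintype.one_lt_card_iff_nontrivial.1 (by omega)
  exact ⟨fun x hx y hy hyx => prel_of_forall_lt hp hneu hx hy hyx,
    fun x hx y hy z hxz hyz =>
      ⟨prel_add hp hneu hx hy hxz hyz, irel_add hp hneu hx hy hxz hyz⟩,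
    fun x hx => ⟨isClosed_setOf_rrel_left hp hneu hx, isClosed_setOf_rrel_right hp hneu hx⟩⟩

/-- Axioms for the Social Welfare Ordering: the relation `R^f` induced
on `𝔻` by an implementable and neutral `f` satisfies weak Pareto, invariance, and
continuity (closedness in `𝔻` of upper and lower contour sets). -/
theorem induced_ordering_axioms
    {n : ℕ} {A : Type*} [Fintype A] [DecidableEq A]
    (hn : 0 < n) (hA : 3 ≤ Fintype.card A)
    (α β : Fin n → EReal) (hαβ : ∀ i, α i < β i)
    (f : Profile n A → A)
    (hf : ImplementableOn (IntervalDom n A α β) f)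
    (hneu : NeutralOn (IntervalDom n A α β) f) :
    (∀ x ∈ DSet α β, ∀ y ∈ DSet α β, (∀ i, y i < x i) →
      PRel (IntervalDom n A α β) f x y) ∧
    (∀ x ∈ DSet α β, ∀ y ∈ DSet α β, ∀ z : Fin n → ℝ,
      x + z ∈ DSet α β → y + z ∈ DSet α β →
      (PRel (IntervalDom n A α β) f x y → PRel (IntervalDom n A α β) f (x + z) (y + z)) ∧
      (IRel (IntervalDom n A α β) f x y → IRel (IntervalDom n A α β) f (x + z) (y + z))) ∧
    (∀ x ∈ DSet α β,
      IsClosed {y : ↥(DSet α β) | RRel (IntervalDom n A α β) f ↑y x} ∧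
      IsClosed {y : ↥(DSet α β) | RRel (IntervalDom n A α β) f x ↑y}) :=
  induced_ordering_axioms_general hA α β f hf hneu
end

section
/- (Representation of Social Welfare Ordering) Let 𝔻 ⊆ ℝⁿ be open and convex, and let R be an ordering on 𝔻 satisfying weak Pareto, invariance, and continuity. Then there exists a weight vector λ ∈ ℝⁿ with λ ≥ 0 componentwise and λ ≠ 0 such that for all x, y ∈ 𝔻: x R y if and only if Σ_{i=1}^n λ_i x_i ≥ Σ_{i=1}^n λ_i y_i. -/
open Set Metric Filter Topology

/-!
Fix `x₀ ∈ D` and a closed ball of radius `ρ` around it inside `D`. By invariance, for `a, b ∈ D`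
with `‖a - b‖ ≤ ρ` the relation `R a b` only depends on whether `a - b` lies in
`C = {v | ‖v‖ ≤ ρ ∧ R (x₀ + v) x₀}` (`localUpperSet R x₀ ρ`). Completeness and transitivity make
`C` midpoint convex and continuity makes it closed, so `C` is convex; weak Pareto puts small
positive vectors into the interior of `C` but keeps `0` out of it. A functional `λ` supporting `C`
at `0` is therefore nonnegative and nonzero, and since `C` contains `w` or `-w` for every small
`w`, near `0` the set `C` is exactly `{λ ≥ 0}`. Chaining along segments of the convex set `D`
turns this local representation into a global one.
-/

theorem Icc_subset_of_isClosed_of_midpoint_mem {S : Set ℝ} (hS : IsClosed S)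
    (hmid : ∀ a ∈ S, ∀ b ∈ S, midpoint ℝ a b ∈ S) {a b : ℝ} (ha : a ∈ S) (hb : b ∈ S) :
    Icc a b ⊆ S := by
  intro t ht
  by_contra htS
  have hAbdd : BddAbove (S ∩ Icc a t) := ⟨t, fun _ h => h.2.2⟩
  have hBbdd : BddBelow (S ∩ Icc t b) := ⟨t, fun _ h => h.2.1⟩
  have hA := (hS.inter isClosed_Icc).csSup_mem ⟨a, ha, le_rfl, ht.1⟩ hAbdd
  have hB := (hS.inter isClosed_Icc).csInf_mem ⟨b, hb, ht.2, le_rfl⟩ hBbdd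
  set a' := sSup (S ∩ Icc a t)
  set b' := sInf (S ∩ Icc t b)
  have ha't : a' < t := hA.2.2.lt_of_ne fun h => htS (h ▸ hA.1)
  have htb' : t < b' := hB.2.1.lt_of_ne' fun h => htS (h ▸ hB.1)
  have hm : midpoint ℝ a' b' ∈ S := hmid _ hA.1 _ hB.1
  rw [midpoint_eq_smul_add, smul_eq_mul, invOf_eq_inv] at hm
  rcases le_total (2⁻¹ * (a' + b')) t with hmt | htm
  · have := le_csSup hAbdd ⟨hm, by linarith [hA.2.1], hmt⟩
    linarith
  · have := csInf_le hBbdd ⟨hm, htm, by linarith [hB.2.2]⟩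
    linarith

theorem convex_of_isClosed_of_midpoint_mem {E : Type*} [AddCommGroup E] [Module ℝ E]
    [TopologicalSpace E] [IsTopologicalAddGroup E] [ContinuousSMul ℝ E] {C : Set E}
    (hC : IsClosed C) (hmid : ∀ v ∈ C, ∀ w ∈ C, midpoint ℝ v w ∈ C) : Convex ℝ C := by
  refine convex_iff_segment_subset.2 fun v hv w hw => ?_
  rw [segment_eq_image_lineMap]
  rintro _ ⟨t, ht, rfl⟩
  refine Icc_subset_of_isClosed_of_midpoint_mem (S := AffineMap.lineMap v w ⁻¹' C)
    (hC.preimage AffineMap.lineMap_continuous) (fun a ha b hb => ?_) (by simpa) (by simpa) ht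
  simpa [AffineMap.map_midpoint] using hmid _ ha _ hb

theorem IsClosed.mem_of_eventually_add_smul_mem {E : Type*} [AddCommGroup E] [Module ℝ E]
    [TopologicalSpace E] [IsTopologicalAddGroup E] [ContinuousSMul ℝ E] {C : Set E}
    (hC : IsClosed C) {v e : E} (h : ∀ᶠ t in 𝓝[>] (0 : ℝ), v + t • e ∈ C) : v ∈ C := by
  refine hC.mem_of_tendsto ?_ h
  have : Continuous fun t : ℝ => v + t • e := by fun_prop
  simpa using (this.tendsto' 0 v (by simp)).mono_left nhdsWithin_le_nhds

def TranslationInvariantOn {E : Type*} [Add E] (D : Set E) (R : E → E → Prop) : Prop :=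
  ∀ x ∈ D, ∀ y ∈ D, ∀ z, x + z ∈ D → y + z ∈ D → R x y → R (x + z) (y + z)

theorem TranslationInvariantOn.rel_iff_of_sub_eq {E : Type*} [AddCommGroup E] {D : Set E}
    {R : E → E → Prop} (h : TranslationInvariantOn D R) {a b c d : E} (ha : a ∈ D) (hb : b ∈ D)
    (hc : c ∈ D) (hd : d ∈ D) (hsub : a - b = c - d) : R a b ↔ R c d := by
  have key : ∀ {a b c d : E}, a ∈ D → b ∈ D → c ∈ D → d ∈ D → a - b = c - d → R a b → R c d := by
    intro a b c d ha hb hc hd hsub hab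
    have hbd : b + (c - a) = d := by
      rw [show d = c - (a - b) by rw [hsub]; abel]; abel
    simpa [hbd] using h a ha b hb (c - a) (by simpa) (by rwa [hbd]) hab
  exact ⟨key ha hb hc hd hsub, key hc hd ha hb hsub.symm⟩

section Local

variable {E : Type*} [NormedAddCommGroup E] {D : Set E} {R : E → E → Prop}
  {x₀ : E} {ρ : ℝ}

theorem add_mem_of_closedBall_subset (hball : closedBall x₀ ρ ⊆ D) {v : E}
    (hv : v ∈ closedBall 0 ρ) : x₀ + v ∈ D :=
  hball (by simpa [mem_closedBall_iff_norm] using hv)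

def localUpperSet (R : E → E → Prop) (x₀ : E) (ρ : ℝ) : Set E :=
  closedBall 0 ρ ∩ {v | R (x₀ + v) x₀}

theorem isClosed_localUpperSet (hball : closedBall x₀ ρ ⊆ D)
    (hcont : IsClosed {y : D | R y x₀}) : IsClosed (localUpperSet R x₀ ρ) := by
  obtain ⟨F, hF, hFR⟩ := isClosed_induced_iff.mp hcont
  have hCF : localUpperSet R x₀ ρ = closedBall 0 ρ ∩ (x₀ + ·) ⁻¹' F := by
    ext v
    refine and_congr_right fun hv => ?_
    have := congrArg (⟨x₀ + v, add_mem_of_closedBall_subset hball hv⟩ ∈ ·) hFR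
    simpa using this.symm
  rw [hCF]
  exact isClosed_closedBall.inter (hF.preimage (by fun_prop))

theorem midpoint_mem_localUpperSet [NormedSpace ℝ E]
    (hcomplete : ∀ x ∈ D, ∀ y ∈ D, R x y ∨ R y x)
    (htrans : ∀ x ∈ D, ∀ y ∈ D, ∀ z ∈ D, R x y → R y z → R x z)
    (hinv : TranslationInvariantOn D R) (hball : closedBall x₀ ρ ⊆ D) {v w : E}
    (hv : v ∈ localUpperSet R x₀ ρ) (hw : w ∈ localUpperSet R x₀ ρ) :
    midpoint ℝ v w ∈ localUpperSet R x₀ ρ := by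
  set m := midpoint ℝ v w
  set u := midpoint ℝ v (-w)
  have hm : m ∈ closedBall 0 ρ := (convex_closedBall 0 ρ).midpoint_mem hv.1 hw.1
  have hu : u ∈ closedBall 0 ρ :=
    (convex_closedBall 0 ρ).midpoint_mem hv.1 (by simpa using hw.1)
  have hvmu : v = u + m := by simp only [u, m, midpoint_eq_smul_add, invOf_eq_inv]; module
  have hwmu : w = m - u := by simp only [u, m, midpoint_eq_smul_add, invOf_eq_inv]; module
  have hmem : ∀ z ∈ closedBall (0 : E) ρ, x₀ + z ∈ D := fun z hz =>
    add_mem_of_closedBall_subset hball hz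
  have hmem' : ∀ z ∈ closedBall (0 : E) ρ, x₀ - z ∈ D := fun z hz => by
    simpa [sub_eq_add_neg] using hmem (-z) (by simpa using hz)
  have hx₀ : x₀ ∈ D := hball (mem_closedBall_self (dist_nonneg.trans hm))
  refine ⟨hm, ?_⟩
  -- If `m ∉ C` then `x₀ - m ≻ x₀`; as `x₀ ± u ≿ x₀ - m`, both `x₀ + u` and `x₀ - u` are strictly
  -- better than `x₀`, and translating the first by `-u` contradicts the second.
  by_contra hm0
  have h1 : ¬ R x₀ (x₀ - m) := by
    rwa [hinv.rel_iff_of_sub_eq hx₀ (hmem' m hm) (hmem m hm) hx₀ (by abel)]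
  have h2 : R (x₀ + u) (x₀ - m) := (hinv.rel_iff_of_sub_eq (hmem v hv.1) hx₀ (hmem u hu)
    (hmem' m hm) (by rw [hvmu]; abel)).1 hv.2
  have h3 : R (x₀ - u) (x₀ - m) := (hinv.rel_iff_of_sub_eq (hmem w hw.1) hx₀ (hmem' u hu)
    (hmem' m hm) (by rw [hwmu]; abel)).1 hw.2
  have h4 : ¬ R x₀ (x₀ + u) := fun h => h1 (htrans _ hx₀ _ (hmem u hu) _ (hmem' m hm) h h2)
  have h5 : ¬ R x₀ (x₀ - u) := fun h => h1 (htrans _ hx₀ _ (hmem' u hu) _ (hmem' m hm) h h3)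
  have h6 : ¬ R (x₀ - u) x₀ := by
    rwa [hinv.rel_iff_of_sub_eq (hmem' u hu) hx₀ hx₀ (hmem u hu) (by abel)]
  exact (hcomplete _ hx₀ _ (hmem' u hu)).elim h5 h6

theorem mem_or_neg_mem_localUpperSet (hcomplete : ∀ x ∈ D, ∀ y ∈ D, R x y ∨ R y x)
    (hinv : TranslationInvariantOn D R) (hball : closedBall x₀ ρ ⊆ D) {w : E}
    (hw : w ∈ closedBall 0 ρ) : w ∈ localUpperSet R x₀ ρ ∨ -w ∈ localUpperSet R x₀ ρ := by
  have hw' : -w ∈ closedBall (0 : E) ρ := by simpa using hw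
  have hx₀ : x₀ ∈ D := hball (mem_closedBall_self (dist_nonneg.trans hw))
  refine (hcomplete _ (add_mem_of_closedBall_subset hball hw) _ hx₀).imp (⟨hw, ·⟩)
    fun h => ⟨hw', ?_⟩
  exact (hinv.rel_iff_of_sub_eq hx₀ (add_mem_of_closedBall_subset hball hw)
    (add_mem_of_closedBall_subset hball hw') hx₀ (by abel)).1 h

end Local

section Global

variable {E : Type*} [NormedAddCommGroup E] [NormedSpace ℝ E]

theorem mem_iff_nonneg_of_forall_mem_or_neg_mem {C : Set E} (hC : IsClosed C) {ℓ : E →ₗ[ℝ] ℝ}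
    (hℓC : ∀ v ∈ C, 0 ≤ ℓ v) {e : E} (he : 0 < ℓ e) {ρ : ℝ}
    (htot : ∀ w ∈ closedBall (0 : E) ρ, w ∈ C ∨ -w ∈ C) {v : E} (hv : ‖v‖ < ρ) :
    v ∈ C ↔ 0 ≤ ℓ v := by
  refine ⟨hℓC v, fun hℓv => hC.mem_of_eventually_add_smul_mem (e := e) ?_⟩
  have hnear : ∀ᶠ t in 𝓝[>] (0 : ℝ), v + t • e ∈ ball 0 ρ := by
    have : Continuous fun t : ℝ => v + t • e := by fun_prop
    exact nhdsWithin_le_nhds <| (this.tendsto' 0 v (by simp)).eventually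
      (isOpen_ball.mem_nhds (mem_ball_zero_iff.2 hv))
  filter_upwards [hnear, self_mem_nhdsWithin] with t ht htpos
  refine (htot _ (ball_subset_closedBall ht)).resolve_right fun hneg => ?_
  have := hℓC _ hneg
  simp only [map_neg, map_add, map_smul, smul_eq_mul] at this
  nlinarith [mul_pos (mem_Ioi.1 htpos) he]

variable {D : Set E} {R : E → E → Prop} {ρ : ℝ}

theorem Convex.rel_of_le_of_forall_norm_sub_lt (hD : Convex ℝ D)
    (htrans : ∀ x ∈ D, ∀ y ∈ D, ∀ z ∈ D, R x y → R y z → R x z) (ℓ : E →ₗ[ℝ] ℝ) (hρ : 0 < ρ)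
    (hloc : ∀ a ∈ D, ∀ b ∈ D, ‖a - b‖ < ρ → ℓ b ≤ ℓ a → R a b) {x y : E} (hx : x ∈ D)
    (hy : y ∈ D) (hxy : ℓ y ≤ ℓ x) : R x y := by
  suffices h : ∀ N : ℕ, ∀ x ∈ D, ℓ y ≤ ℓ x → ‖x - y‖ < (N + 1) * ρ → R x y by
    obtain ⟨N, hN⟩ := exists_lt_nsmul hρ ‖x - y‖
    exact h N x hx hxy (hN.trans_le (by rw [nsmul_eq_mul]; gcongr; linarith))
  intro N
  induction N with
  | zero => intro x hx hxy hN; exact hloc x hx y hy (by simpa using hN) hxy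
  | succ N ih =>
    intro x hx hxy hN
    set t : ℝ := 1 / (N + 2)
    have ht : t ∈ Icc (0 : ℝ) 1 := ⟨by positivity, by rw [div_le_one (by positivity)]; linarith⟩
    set z := x + t • (y - x)
    have hz : z ∈ D := hD.add_smul_sub_mem hx hy ht
    have hℓz : ℓ z = ℓ x + t * (ℓ y - ℓ x) := by simp [z]
    have hxz : ‖x - z‖ = t * ‖x - y‖ := by
      simp [z, norm_smul, norm_sub_rev, abs_of_nonneg ht.1]
    have hzy : ‖z - y‖ = (1 - t) * ‖x - y‖ := by
      rw [show z - y = (1 - t) • (x - y) by simp only [z]; module, norm_smul,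
        Real.norm_of_nonneg (by linarith [ht.2])]
    have htN : t * (N + 2) = 1 := by simp only [t]; field_simp
    push_cast at hN
    refine htrans x hx z hz y hy (hloc x hx z hz ?_ ?_) (ih z hz ?_ ?_)
    · rw [hxz]
      calc t * ‖x - y‖ < t * ((N + 1 + 1) * ρ) := by gcongr
        _ = ρ := by linear_combination ρ * htN
    · rw [hℓz]; nlinarith [ht.1]
    · rw [hℓz]; nlinarith [ht.2]
    · rw [hzy]
      calc (1 - t) * ‖x - y‖ < (1 - t) * ((N + 1 + 1) * ρ) := by
            gcongr; nlinarith
        _ = (N + 1) * ρ := by linear_combination -ρ * htN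

theorem Convex.rel_iff_le_of_forall_norm_sub_lt (hD : Convex ℝ D)
    (htrans : ∀ x ∈ D, ∀ y ∈ D, ∀ z ∈ D, R x y → R y z → R x z) (ℓ : E →ₗ[ℝ] ℝ) (hρ : 0 < ρ)
    (hloc : ∀ a ∈ D, ∀ b ∈ D, ‖a - b‖ < ρ → (R a b ↔ ℓ b ≤ ℓ a)) {x y : E} (hx : x ∈ D)
    (hy : y ∈ D) : R x y ↔ ℓ y ≤ ℓ x := by
  refine ⟨fun hxy => ?_, hD.rel_of_le_of_forall_norm_sub_lt htrans ℓ hρ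
    (fun a ha b hb hab => (hloc a ha b hb hab).2) hx hy⟩
  -- A point `z` of the segment close to `y` is strictly worse than `y`, yet `z ≿ x ≿ y`.
  by_contra! hlt
  set t : ℝ := ρ / (ρ + ‖x - y‖)
  have ht : t ∈ Icc (0 : ℝ) 1 := ⟨by positivity, by rw [div_le_one (by positivity)]; simp⟩
  have htpos : 0 < t := by positivity
  set z := y + t • (x - y)
  have hz : z ∈ D := hD.add_smul_sub_mem hy hx ht
  have hℓz : ℓ z = ℓ y + t * (ℓ x - ℓ y) := by simp [z]
  have hzy : ‖z - y‖ < ρ := by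
    rw [show z - y = t • (x - y) by simp [z], norm_smul, Real.norm_of_nonneg ht.1,
      div_mul_eq_mul_div, div_lt_iff₀ (by positivity)]
    nlinarith [norm_nonneg (x - y)]
  have hzx : R z x := hD.rel_of_le_of_forall_norm_sub_lt htrans ℓ hρ
    (fun a ha b hb hab => (hloc a ha b hb hab).2) hz hx (by rw [hℓz]; nlinarith [ht.2])
  have := (hloc z hz y hy hzy).1 (htrans z hz x hx y hy hzx hxy)
  rw [hℓz] at this
  nlinarith

end Global

section Pareto

variable {n : ℕ} {D : Set (Fin n → ℝ)} {R : (Fin n → ℝ) → (Fin n → ℝ) → Prop} {x₀ : Fin n → ℝ}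
  {ρ : ℝ}

theorem mem_localUpperSet_of_pos
    (hWP : ∀ x ∈ D, ∀ y ∈ D, (∀ i, y i < x i) → (R x y ∧ ¬ R y x))
    (hball : closedBall x₀ ρ ⊆ D) {v : Fin n → ℝ} (hv : v ∈ closedBall 0 ρ)
    (hpos : ∀ i, 0 < v i) : v ∈ localUpperSet R x₀ ρ :=
  ⟨hv, (hWP _ (add_mem_of_closedBall_subset hball hv) _
    (hball (mem_closedBall_self (dist_nonneg.trans hv))) fun i => by simpa using hpos i).1⟩

theorem zero_notMem_interior_localUpperSet
    (hWP : ∀ x ∈ D, ∀ y ∈ D, (∀ i, y i < x i) → (R x y ∧ ¬ R y x))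
    (hball : closedBall x₀ ρ ⊆ D) : (0 : Fin n → ℝ) ∉ interior (localUpperSet R x₀ ρ) := by
  intro h0
  have hlim : Tendsto (fun t : ℝ => -(t • (1 : Fin n → ℝ))) (𝓝[>] 0) (𝓝 0) := by
    have : Continuous fun t : ℝ => -(t • (1 : Fin n → ℝ)) := by fun_prop
    simpa using (this.tendsto' 0 0 (by simp)).mono_left nhdsWithin_le_nhds
  obtain ⟨t, ht, htpos⟩ :=
    ((hlim.eventually (mem_interior_iff_mem_nhds.1 h0)).and self_mem_nhdsWithin).exists
  have htC : -(t • 1) ∈ localUpperSet R x₀ ρ := ht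
  exact (hWP x₀ (hball (mem_closedBall_self (dist_nonneg.trans htC.1))) _
    (add_mem_of_closedBall_subset hball htC.1) fun i => by simpa using htpos).2 htC.2

theorem interior_localUpperSet_nonempty
    (hWP : ∀ x ∈ D, ∀ y ∈ D, (∀ i, y i < x i) → (R x y ∧ ¬ R y x))
    (hball : closedBall x₀ ρ ⊆ D) (hρ : 0 < ρ) : (interior (localUpperSet R x₀ ρ)).Nonempty := by
  have hU : IsOpen (ball (0 : Fin n → ℝ) ρ ∩ univ.pi fun _ => Ioi 0) :=
    isOpen_ball.inter (isOpen_set_pi finite_univ fun _ _ => isOpen_Ioi)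
  refine ⟨fun _ => ρ / 2, interior_maximal (fun v hv => mem_localUpperSet_of_pos hWP hball
    (ball_subset_closedBall hv.1) fun i => hv.2 i trivial) hU ⟨?_, fun i _ => half_pos hρ⟩⟩
  rw [mem_ball_zero_iff]
  refine (pi_norm_const_le _).trans_lt ?_
  rw [Real.norm_of_nonneg (half_pos hρ).le]
  exact half_lt_self hρ

theorem single_mem_localUpperSet
    (hWP : ∀ x ∈ D, ∀ y ∈ D, (∀ i, y i < x i) → (R x y ∧ ¬ R y x))
    (hball : closedBall x₀ ρ ⊆ D) (hC : IsClosed (localUpperSet R x₀ ρ)) (hρ : 0 < ρ)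
    (i : Fin n) : Pi.single i (ρ / 2) ∈ localUpperSet R x₀ ρ := by
  refine hC.mem_of_eventually_add_smul_mem (e := 1) ?_
  filter_upwards [Ioo_mem_nhdsGT (half_pos hρ)] with t ht
  have hcoord : ∀ j, 0 < (Pi.single i (ρ / 2) : Fin n → ℝ) j + t ∧
      (Pi.single i (ρ / 2) : Fin n → ℝ) j + t ≤ ρ := by
    intro j
    rcases eq_or_ne j i with rfl | hji
    · simp only [Pi.single_eq_same]; constructor <;> linarith [ht.1, ht.2]
    · simp only [Pi.single_eq_of_ne hji]; constructor <;> linarith [ht.1, ht.2]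
  refine mem_localUpperSet_of_pos hWP hball ?_ fun j => by simpa using (hcoord j).1
  rw [mem_closedBall_zero_iff, pi_norm_le_iff_of_nonneg hρ.le]
  intro j
  simpa [Real.norm_of_nonneg (hcoord j).1.le] using (hcoord j).2

theorem exists_dual_nonneg_on_localUpperSet
    (hcomplete : ∀ x ∈ D, ∀ y ∈ D, R x y ∨ R y x)
    (htrans : ∀ x ∈ D, ∀ y ∈ D, ∀ z ∈ D, R x y → R y z → R x z)
    (hWP : ∀ x ∈ D, ∀ y ∈ D, (∀ i, y i < x i) → (R x y ∧ ¬ R y x))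
    (hinv : TranslationInvariantOn D R) (hball : closedBall x₀ ρ ⊆ D)
    (hC : IsClosed (localUpperSet R x₀ ρ)) (hρ : 0 < ρ) :
    ∃ ℓ : StrongDual ℝ (Fin n → ℝ), ℓ ≠ 0 ∧ ∀ v ∈ localUpperSet R x₀ ρ, 0 ≤ ℓ v := by
  obtain ⟨f, u, hf0, hfC, hu⟩ := geometric_hahn_banach_of_nonempty_interior
    (convex_of_isClosed_of_midpoint_mem hC fun v hv w hw =>
      midpoint_mem_localUpperSet hcomplete htrans hinv hball hv hw)
    (convex_singleton 0)
    (disjoint_singleton_right.2 (zero_notMem_interior_localUpperSet hWP hball))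
    (interior_localUpperSet_nonempty hWP hball hρ) (singleton_nonempty 0)
  exact ⟨-f, neg_ne_zero.2 hf0, fun v hv => by simpa using (hfC v hv).trans (hu 0 rfl)⟩

theorem exists_weights_rel_iff_of_norm_sub_lt
    (hcomplete : ∀ x ∈ D, ∀ y ∈ D, R x y ∨ R y x)
    (htrans : ∀ x ∈ D, ∀ y ∈ D, ∀ z ∈ D, R x y → R y z → R x z)
    (hWP : ∀ x ∈ D, ∀ y ∈ D, (∀ i, y i < x i) → (R x y ∧ ¬ R y x))
    (hinv : TranslationInvariantOn D R) (hcont : IsClosed {y : D | R y x₀})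
    (hball : closedBall x₀ ρ ⊆ D) (hρ : 0 < ρ) :
    ∃ lam : Fin n → ℝ, (∀ i, 0 ≤ lam i) ∧ lam ≠ 0 ∧
      ∀ a ∈ D, ∀ b ∈ D, ‖a - b‖ < ρ → (R a b ↔ lam ⬝ᵥ b ≤ lam ⬝ᵥ a) := by
  have hC := isClosed_localUpperSet hball hcont
  obtain ⟨ℓ, hℓ0, hℓC⟩ :=
    exists_dual_nonneg_on_localUpperSet hcomplete htrans hWP hinv hball hC hρ
  set lam := (dotProductEquiv ℝ (Fin n)).symm ℓ.toLinearMap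
  have hℓ : ∀ v, ℓ v = lam ⬝ᵥ v := fun v =>
    (congrArg (· v) ((dotProductEquiv ℝ (Fin n)).apply_symm_apply ℓ.toLinearMap)).symm
  have hlam : ∀ i, 0 ≤ lam i := fun i => by
    have := hℓC _ (single_mem_localUpperSet hWP hball hC hρ i)
    rw [hℓ, dotProduct_single] at this
    exact nonneg_of_mul_nonneg_left this (half_pos hρ)
  have hlam0 : lam ≠ 0 := fun h => hℓ0 (by ext v; simp [hℓ, h])
  have hone : 0 < ℓ 1 := by
    rw [hℓ, dotProduct_one]
    exact Fintype.sum_pos (lt_of_le_of_ne hlam hlam0.symm)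
  refine ⟨lam, hlam, hlam0, fun a ha b hb hab => ?_⟩
  have habC : a - b ∈ closedBall 0 ρ := mem_closedBall_zero_iff.2 hab.le
  calc R a b ↔ R (x₀ + (a - b)) x₀ := hinv.rel_iff_of_sub_eq ha hb
        (add_mem_of_closedBall_subset hball habC) (hball (mem_closedBall_self hρ.le)) (by abel)
    _ ↔ a - b ∈ localUpperSet R x₀ ρ := (and_iff_right habC).symm
    _ ↔ 0 ≤ ℓ (a - b) := mem_iff_nonneg_of_forall_mem_or_neg_mem (ℓ := ℓ.toLinearMap) hC hℓC hone
        (fun w hw => mem_or_neg_mem_localUpperSet hcomplete hinv hball hw) hab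
    _ ↔ lam ⬝ᵥ b ≤ lam ⬝ᵥ a := by rw [hℓ, dotProduct_sub, sub_nonneg]

end Pareto

theorem representation_of_social_welfare_ordering_general
    {n : ℕ} (hn : 0 < n) (D : Set (Fin n → ℝ))
    (hopen : IsOpen D) (hconv : Convex ℝ D)
    (R : (Fin n → ℝ) → (Fin n → ℝ) → Prop)
    (hcomplete : ∀ x ∈ D, ∀ y ∈ D, R x y ∨ R y x)
    (htrans : ∀ x ∈ D, ∀ y ∈ D, ∀ z ∈ D, R x y → R y z → R x z)
    (hWP : ∀ x ∈ D, ∀ y ∈ D, (∀ i, y i < x i) → (R x y ∧ ¬ R y x))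
    (hInv : ∀ x ∈ D, ∀ y ∈ D, ∀ z : Fin n → ℝ, x + z ∈ D → y + z ∈ D →
      ((R x y ∧ ¬ R y x) → (R (x + z) (y + z) ∧ ¬ R (y + z) (x + z))) ∧
      ((R x y ∧ R y x) → (R (x + z) (y + z) ∧ R (y + z) (x + z))))
    (hCont : ∀ x ∈ D,
      IsClosed {y : ↥D | R ↑y x} ∧ IsClosed {y : ↥D | R x ↑y}) :
    ∃ lam : Fin n → ℝ, (∀ i, 0 ≤ lam i) ∧ lam ≠ 0 ∧
      ∀ x ∈ D, ∀ y ∈ D,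
        (R x y ↔ ∑ i, lam i * y i ≤ ∑ i, lam i * x i) := by
  rcases D.eq_empty_or_nonempty with rfl | ⟨x₀, hx₀⟩
  · exact ⟨1, fun _ => zero_le_one, fun h => one_ne_zero (congrFun h ⟨0, hn⟩), by simp⟩
  obtain ⟨ρ, hρ, hball⟩ := nhds_basis_closedBall.mem_iff.1 (hopen.mem_nhds hx₀)
  have hinv : TranslationInvariantOn D R := fun x hx y hy z hxz hyz hxy => by
    by_cases hyx : R y x
    exacts [((hInv x hx y hy z hxz hyz).2 ⟨hxy, hyx⟩).1,
      ((hInv x hx y hy z hxz hyz).1 ⟨hxy, hyx⟩).1]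
  obtain ⟨lam, hlam, hlam0, hloc⟩ := exists_weights_rel_iff_of_norm_sub_lt hcomplete htrans hWP
    hinv (hCont x₀ hx₀).1 hball hρ
  exact ⟨lam, hlam, hlam0, fun x hx y hy =>
    hconv.rel_iff_le_of_forall_norm_sub_lt htrans (dotProductEquiv ℝ (Fin n) lam) hρ hloc hx hy⟩

/-- Representation of Social Welfare Ordering: an ordering `R` on an
open convex set `D ⊆ ℝⁿ` satisfying weak Pareto, invariance and continuity is
represented by a non-zero non-negative weight vector `lam`:
`x R y ↔ ∑ i, lam i * x i ≥ ∑ i, lam i * y i`.  Here `P x y := R x y ∧ ¬ R y x`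
and `I x y := R x y ∧ R y x`. -/
theorem representation_of_social_welfare_ordering
    {n : ℕ} (hn : 0 < n) (D : Set (Fin n → ℝ))
    (hopen : IsOpen D) (hconv : Convex ℝ D)
    (R : (Fin n → ℝ) → (Fin n → ℝ) → Prop)
    (hrefl : ∀ x ∈ D, R x x)
    (hcomplete : ∀ x ∈ D, ∀ y ∈ D, R x y ∨ R y x)
    (htrans : ∀ x ∈ D, ∀ y ∈ D, ∀ z ∈ D, R x y → R y z → R x z)
    (hWP : ∀ x ∈ D, ∀ y ∈ D, (∀ i, y i < x i) → (R x y ∧ ¬ R y x))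
    (hInv : ∀ x ∈ D, ∀ y ∈ D, ∀ z : Fin n → ℝ, x + z ∈ D → y + z ∈ D →
      ((R x y ∧ ¬ R y x) → (R (x + z) (y + z) ∧ ¬ R (y + z) (x + z))) ∧
      ((R x y ∧ R y x) → (R (x + z) (y + z) ∧ R (y + z) (x + z))))
    (hCont : ∀ x ∈ D,
      IsClosed {y : ↥D | R ↑y x} ∧ IsClosed {y : ↥D | R x ↑y}) :
    ∃ lam : Fin n → ℝ, (∀ i, 0 ≤ lam i) ∧ lam ≠ 0 ∧
      ∀ x ∈ D, ∀ y ∈ D,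
        (R x y ↔ ∑ i, lam i * y i ≤ ∑ i, lam i * x i) :=
  representation_of_social_welfare_ordering_general hn D hopen hconv R hcomplete htrans hWP hInv
    hCont
end

section
/- (Roberts' Affine Maximizer Theorem) Suppose T_i = ℝ^m for all i ∈ N, i.e. 𝕋ⁿ = ℝ^{m×n}. If f is an implementable social choice function and satisfies non-imposition, then there exist a weight vector λ ∈ ℝⁿ with λ ≥ 0 componentwise and λ ≠ 0, and a function κ : A → ℝ, such that for all t ∈ 𝕋ⁿ: f(t) ∈ argmax_{a ∈ A} [Σ_{i ∈ N} λ_i t_i^a − κ(a)]. -/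
open Function

/-- Payment rule `p` implements `f` in dominant strategies:
no agent `i` can gain by a unilateral deviation (a change of his own row only). -/
def Implements {n : ℕ} {A : Type*} (f : Profile n A → A)
    (p : Profile n A → Fin n → ℝ) : Prop :=
  ∀ t s : Profile n A, ∀ i : Fin n,
    (∀ j : Fin n, j ≠ i → ∀ a : A, s a j = t a j) →
    t (f t) i + p t i ≥ t (f s) i + p s i

/-- `f` is implementable in dominant strategies. -/
def Implementable {n : ℕ} {A : Type*} (f : Profile n A → A) : Prop :=
  ∃ p, Implements f p

/-- The choice set `C^f(t)`: alternatives `a` such that raising the column of `a`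
by any strictly positive `ε` makes `f` choose `a`. -/
def ChoiceSet {n : ℕ} {A : Type*} [DecidableEq A]
    (f : Profile n A → A) (t : Profile n A) : Set A :=
  {a | ∀ ε : Fin n → ℝ, (∀ i, 0 < ε i) →
    f (Function.update t a (t a + ε)) = a}

/-- `f` is neutral: permuting the columns of a profile permutes the choice set
accordingly (the profile `s` induced by `ρ` has `s^{ρ a} = t^a`, i.e. `s b = t (ρ⁻¹ b)`). -/
def Neutral {n : ℕ} {A : Type*} [DecidableEq A] (f : Profile n A → A) : Prop :=
  ∀ t : Profile n A, ∀ ρ : Equiv.Perm A,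
    ChoiceSet f (fun b => t (ρ.symm b)) = ρ '' ChoiceSet f t

/-- `f` satisfies non-imposition: every alternative is chosen at some profile. -/
def NonImposition {n : ℕ} {A : Type*} (f : Profile n A → A) : Prop :=
  ∀ a : A, ∃ t : Profile n A, f t = a

/-- The `P`-set of the pair `(a,b)`. -/
def RPSet {n : ℕ} {A : Type*} [DecidableEq A] (f : Profile n A → A) (a b : A) :
    Set (Fin n → ℝ) :=
  {α | ∃ t : Profile n A, a ∈ ChoiceSet f t ∧ t a - t b = α}

/-- The profile `1^a_ε`: column `a` equals the constant vector `ε·𝟙`, all other columns are `0`. -/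
def OneProf {n : ℕ} {A : Type*} [DecidableEq A] (a : A) (ε : ℝ) : Profile n A :=
  fun b => if b = a then (fun _ => ε) else 0

/-!
For `a ≠ b` let `P(a,b)` be the set of differences `t^a - t^b` over the profiles `t` with
`a ∈ C^f(t)`; it is an upper set. Applying weak monotonicity one agent at a time, `f` keeps its
choice when the advantage of the chosen alternative over every other one grows in every
coordinate. This rules out negative two-cycles (`α ∈ P(a,b)` and `β ∈ P(b,a)` give
`0 ≤ α i + β i` for some `i`), and then forces `P(a,b) ∪ -P(b,a)` to be everything and
`P(a,b) + P(b,c) + ε𝟙 ⊆ P(a,c)`. So the threshold `g_ab(α) = inf {x | α + x𝟙 ∈ P(a,b)}`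
satisfies `g_ba(-α) = -g_ab(α)` and the cocycle identity `g_ac(α + β) = g_ab(α) + g_bc(β)`.
With three alternatives, `g_ab(α) - g_ab(0)` does not depend on `(a,b)` and is additive,
antitone and equal to `-c` on `c𝟙`, hence equal to `-∑ λ_i α_i`, while `g_ab(0)` is a
coboundary `κ a - κ b`. Finally `f t ∈ C^f(t)` gives `g_{f(t) b}(t^{f(t)} - t^b) ≤ 0`.
-/

theorem exists_weights_of_monotone {ι : Type*} [Fintype ι] (H : (ι → ℝ) →+ ℝ)
    (hH : Monotone H) (hconst : ∀ c : ℝ, H (fun _ => c) = c) :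
    ∃ lam : ι → ℝ, (∀ i, 0 ≤ lam i) ∧ ∑ i, lam i = 1 ∧ ∀ α, H α = ∑ i, lam i * α i := by
  classical
  have hcont : Continuous H := by
    refine AddMonoidHomClass.continuous_of_bound H 1 fun α => ?_
    have hα : ∀ i, |α i| ≤ ‖α‖ := fun i => norm_le_pi_norm α i
    have hlo := hH (a := fun _ => -‖α‖) fun i => (abs_le.mp (hα i)).1
    have hhi := hH (b := fun _ => ‖α‖) fun i => (abs_le.mp (hα i)).2
    rw [hconst] at hlo hhi
    rw [Real.norm_eq_abs, one_mul, abs_le]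
    exact ⟨hlo, hhi⟩
  have hsum : ∀ α, H α = ∑ i, H (Pi.single i 1) * α i := fun α => by
    conv_lhs => rw [← Finset.univ_sum_single α]
    simp only [map_sum]
    refine Finset.sum_congr rfl fun i _ => ?_
    rw [mul_comm, ← smul_eq_mul, ← map_real_smul H hcont, ← Pi.single_smul, smul_eq_mul, mul_one]
  refine ⟨fun i => H (Pi.single i 1), fun i => ?_, ?_, hsum⟩
  · simpa using hH (Pi.single_nonneg.mpr zero_le_one : (0 : ι → ℝ) ≤ Pi.single i 1)
  · simpa using (hsum fun _ => 1).symm.trans (hconst 1)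

theorem exists_sub_eq_of_cocycle {A G : Type*} [AddCommGroup G] (γ : A → A → G)
    (hanti : ∀ a b, a ≠ b → γ a b = -γ b a)
    (hcoc : ∀ a b c, a ≠ b → b ≠ c → a ≠ c → γ a c = γ a b + γ b c) :
    ∃ κ : A → G, ∀ a b, a ≠ b → γ a b = κ a - κ b := by
  classical
  rcases isEmpty_or_nonempty A with hA | ⟨⟨a₀⟩⟩
  · exact ⟨0, fun a => isEmptyElim a⟩
  refine ⟨fun a => if a = a₀ then 0 else γ a a₀, fun a b hab => ?_⟩
  by_cases hb : b = a₀
  · subst hb; simp [hab]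
  by_cases ha : a = a₀
  · subst ha; simp [hanti a b hab, Ne.symm hab]
  · simp only [hcoc a a₀ b ha (Ne.symm hb) hab, hanti a₀ b (Ne.symm hb), ha, hb, if_false]
    abel

theorem exists_ne_ne_of_three_le_card {A : Type*} [Fintype A] (hA : 3 ≤ Fintype.card A)
    (a b : A) : ∃ c, c ≠ a ∧ c ≠ b := by
  classical
  obtain ⟨c, -, hc⟩ := Finset.exists_mem_notMem_of_card_lt_card (s := {a, b})
    (t := Finset.univ) (by rw [Finset.card_univ]; linarith [Finset.card_le_two (a := a) (b := b)])
  exact ⟨c, by simpa [not_or] using hc⟩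

theorem offDiag_eq_of_triples {A X : Type*} [Fintype A] (hA : 3 ≤ Fintype.card A)
    (F : A → A → X)
    (hrow : ∀ a b c, a ≠ b → b ≠ c → a ≠ c → F a b = F a c)
    (hcol : ∀ a b c, a ≠ b → b ≠ c → a ≠ c → F a c = F b c)
    {a b c d : A} (hab : a ≠ b) (hcd : c ≠ d) : F a b = F c d := by
  obtain ⟨e, hea, hec⟩ := exists_ne_ne_of_three_le_card hA a c
  calc F a b = F a e := by
        rcases eq_or_ne b e with rfl | hbe
        · rfl
        · exact hrow a b e hab hbe (Ne.symm hea)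
    _ = F c e := by
        rcases eq_or_ne a c with rfl | hac
        · rfl
        · exact hcol a c e hac (Ne.symm hec) (Ne.symm hea)
    _ = F c d := by
        rcases eq_or_ne e d with rfl | hed
        · rfl
        · exact hrow c e d (Ne.symm hec) hed hcd

section

variable {n : ℕ} {A : Type*} {f : Profile n A → A}

theorem Implements.weak_monotonicity {p : Profile n A → Fin n → ℝ} (hp : Implements f p)
    {t s : Profile n A} {i : Fin n} (h : ∀ j, j ≠ i → ∀ a, s a j = t a j) :
    s (f t) i - t (f t) i ≤ s (f s) i - t (f s) i := by
  have h₁ := hp t s i h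
  have h₂ := hp s t i fun j hj a => (h j hj a).symm
  linarith

theorem Implementable.apply_eq_of_forall_sub_lt (hf : Implementable f) {t u : Profile n A}
    {a : A} (ht : f t = a) (h : ∀ x, x ≠ a → ∀ i, t a i - t x i < u a i - u x i) :
    f u = a := by
  obtain ⟨p, hp⟩ := hf
  let v : Finset (Fin n) → Profile n A := fun s x i => if i ∈ s then u x i else t x i
  suffices ∀ s, f (v s) = a by simpa [v] using this Finset.univ
  intro s
  induction s using Finset.induction_on with
  | empty => simpa [v] using ht
  | insert i s hi ih =>
    by_contra hne
    have hw := hp.weak_monotonicity (t := v s) (s := v (insert i s)) (i := i)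
      fun j hj x => by simp [v, hj]
    have hlt := h _ hne i
    simp only [ih, v, Finset.mem_insert_self, if_true, hi, if_false] at hw
    linarith

variable [DecidableEq A]

theorem Implementable.mem_choiceSet (hf : Implementable f) (t : Profile n A) :
    f t ∈ ChoiceSet f t := fun ε hε =>
  hf.apply_eq_of_forall_sub_lt rfl fun x hx i => by
    simp only [update_self, update_of_ne hx, Pi.add_apply]
    linarith [hε i]

theorem Implementable.sub_mem_rpSet (hf : Implementable f) (t : Profile n A) (b : A) :
    t (f t) - t b ∈ RPSet f (f t) b :=
  ⟨t, hf.mem_choiceSet t, rfl⟩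

theorem Implementable.rpSet_nonempty (hf : Implementable f) (hni : NonImposition f) (a b : A) :
    (RPSet f a b).Nonempty := by
  obtain ⟨t, rfl⟩ := hni a
  exact ⟨_, hf.sub_mem_rpSet t b⟩

theorem isUpperSet_rpSet {a b : A} (hab : a ≠ b) : IsUpperSet (RPSet f a b) := by
  rintro _ β hle ⟨t, ht, rfl⟩
  refine ⟨update t a (t a + (β - (t a - t b))), fun ε hε => ?_, ?_⟩
  · rw [update_idem, update_self, add_assoc]
    refine ht _ fun i => ?_
    have := hle i
    simp only [Pi.add_apply, Pi.sub_apply] at this ⊢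
    linarith [hε i]
  · rw [update_self, update_of_ne (Ne.symm hab)]
    abel

theorem Implementable.exists_profile_of_mem_rpSet (hf : Implementable f) {a b : A}
    (hab : a ≠ b) {α : Fin n → ℝ} (hα : α ∈ RPSet f a b) {ε : Fin n → ℝ}
    (hε : ∀ i, 0 < ε i) (L : A → Fin n → ℝ) :
    ∃ w : Profile n A, f w = a ∧ (∀ i, w a i - w b i = α i + ε i) ∧
      ∀ c, c ≠ a → c ≠ b → ∀ i, L c i ≤ w a i - w c i := by
  obtain ⟨t, ht, rfl⟩ := hα
  have ht' : f (update t a (t a + fun i => ε i / 2)) = a := ht _ fun i => half_pos (hε i)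
  let w : Profile n A := fun c => if c = a then t a + ε else if c = b then t b
    else fun i => min (t c i) (t a i + ε i - L c i) - 1
  refine ⟨w, hf.apply_eq_of_forall_sub_lt ht' fun x hx i => ?_, fun i => ?_,
    fun c hca hcb i => ?_⟩
  · simp only [update_self, update_of_ne hx, w, hx, if_true, if_false, Pi.add_apply]
    split_ifs with hxb
    · subst hxb; linarith [hε i]
    · linarith [hε i, min_le_left (t x i) (t a i + ε i - L x i)]
  · simp only [w, Ne.symm hab, if_true, if_false, Pi.add_apply, Pi.sub_apply]
    ring
  · simp only [w, hca, hcb, if_true, if_false, Pi.add_apply]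
    linarith [min_le_right (t c i) (t a i + ε i - L c i)]

theorem Implementable.exists_nonneg_add_of_mem_rpSet (hf : Implementable f) {a b : A}
    (hab : a ≠ b) {α β : Fin n → ℝ} (hα : α ∈ RPSet f a b) (hβ : β ∈ RPSet f b a) :
    ∃ i, 0 ≤ α i + β i := by
  by_contra! hneg
  let ε : Fin n → ℝ := fun i => -(α i + β i) / 4
  have hε4 : ∀ i, α i + β i + 4 * ε i = 0 := fun i => by simp only [ε]; ring
  have hε : ∀ i, 0 < ε i := fun i => by linarith [hneg i, hε4 i]
  obtain ⟨w₁, hw₁, hw₁ab, -⟩ := hf.exists_profile_of_mem_rpSet hab hα hε 0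
  obtain ⟨w₂, hw₂, hw₂ba, -⟩ := hf.exists_profile_of_mem_rpSet hab.symm hβ hε 0
  -- `a` beats `b` at `u` by more than at `w₁`, and `b` beats `a` by more than at `w₂`.
  let u : Profile n A := fun c => if c = a then 0 else if c = b then fun i => -α i - 2 * ε i
    else fun i => min (w₁ c i - w₁ a i) (w₂ c i - w₂ b i - α i - 2 * ε i) - 1
  have hua : f u = a := hf.apply_eq_of_forall_sub_lt hw₁ fun x hx i => by
    simp only [u, hx, if_true, if_false, Pi.zero_apply]
    split_ifs with hxb
    · subst hxb; linarith [hw₁ab i, hε i]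
    · linarith [min_le_left (w₁ x i - w₁ a i) (w₂ x i - w₂ b i - α i - 2 * ε i)]
  have hub : f u = b := hf.apply_eq_of_forall_sub_lt hw₂ fun x hx i => by
    simp only [u, hx, Ne.symm hab, if_true, if_false]
    split_ifs with hxa
    · subst hxa; simp only [Pi.zero_apply]; linarith [hw₂ba i, hneg i, hε4 i]
    · linarith [min_le_right (w₁ x i - w₁ a i) (w₂ x i - w₂ b i - α i - 2 * ε i)]
  exact hab (hua.symm.trans hub)

theorem Implementable.mem_rpSet_or_neg_mem_rpSet (hf : Implementable f)
    (hni : NonImposition f) {a b : A} (hab : a ≠ b) (α : Fin n → ℝ) :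
    α ∈ RPSet f a b ∨ -α ∈ RPSet f b a := by
  obtain ⟨s, hs⟩ := hni a
  -- any third alternative `d` would close, with `s`, the cycle `a → d → a` of total weight `-1`
  let u : Profile n A := fun x => if x = a then α else if x = b then 0
    else fun i => α i - (s a i - s x i) - 1
  have hmem := hf.sub_mem_rpSet u
  by_cases hda : f u = a
  · left; simpa [u, hda, Ne.symm hab] using hmem b
  by_cases hdb : f u = b
  · right; simpa [u, hdb, Ne.symm hab] using hmem a
  obtain ⟨i, hi⟩ := hf.exists_nonneg_add_of_mem_rpSet hda (hmem a) (hs ▸ hf.sub_mem_rpSet s (f u))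
  simp only [u, hda, hdb, if_true, if_false, Pi.sub_apply] at hi
  linarith

theorem Implementable.add_add_const_mem_rpSet (hf : Implementable f) (hni : NonImposition f)
    {a b c : A} (hab : a ≠ b) (hbc : b ≠ c) (hac : a ≠ c) {α β : Fin n → ℝ}
    (hα : α ∈ RPSet f a b) (hβ : β ∈ RPSet f b c) {ε : ℝ} (hε : 0 < ε) :
    α + β + (fun _ => ε) ∈ RPSet f a c := by
  obtain ⟨s, hs⟩ := hni b
  obtain ⟨w, hw, hwbc, hwlow⟩ := hf.exists_profile_of_mem_rpSet hbc hβ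
    (fun _ => half_pos hε) fun x i => s b i - s x i + 1
  let v := update w a (w b + α + fun _ => ε / 2)
  have hv : ∀ x, x ≠ a → v x = w x := fun x hx => update_of_ne hx _ _
  have hmem := hf.sub_mem_rpSet v
  by_cases hda : f v = a
  · convert hda ▸ hmem c using 1
    ext i
    simp only [v, hv c hac.symm, update_self, Pi.add_apply, Pi.sub_apply]
    linarith [hwbc i]
  exfalso
  by_cases hdb : f v = b
  · obtain ⟨i, hi⟩ := hf.exists_nonneg_add_of_mem_rpSet hab hα (hdb ▸ hmem a)
    simp only [v, hv b hab.symm, update_self, Pi.add_apply, Pi.sub_apply] at hi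
    linarith
  by_cases hdc : f v = c
  · obtain ⟨i, hi⟩ := hf.exists_nonneg_add_of_mem_rpSet hbc hβ (hdc ▸ hmem b)
    simp only [hv c hac.symm, hv b hab.symm, Pi.sub_apply] at hi
    linarith [hwbc i]
  · obtain ⟨i, hi⟩ := hf.exists_nonneg_add_of_mem_rpSet hdb (hmem b)
      (hs ▸ hf.sub_mem_rpSet s (f v))
    simp only [hv _ hda, hv b hab.symm, Pi.sub_apply] at hi
    linarith [hwlow (f v) hdb hdc i]

variable (f) in
noncomputable def threshold (a b : A) (α : Fin n → ℝ) : ℝ :=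
  sInf {x : ℝ | α + (fun _ => x) ∈ RPSet f a b}

section threshold

variable (hf : Implementable f) (hni : NonImposition f) {a b c : A} {α β : Fin n → ℝ}
include hf hni

theorem Implementable.threshold_le (hab : a ≠ b) {x : ℝ} (h : α + (fun _ => x) ∈ RPSet f a b) :
    threshold f a b α ≤ x := by
  refine csInf_le ?_ h
  obtain ⟨ν, hν⟩ := hf.rpSet_nonempty hni b a
  obtain ⟨K, hK⟩ := Finite.exists_le fun i => α i + ν i
  refine ⟨-K, fun y hy => ?_⟩
  obtain ⟨i, hi⟩ := hf.exists_nonneg_add_of_mem_rpSet hab hy hν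
  simp only [Pi.add_apply] at hi
  linarith [hK i]

theorem Implementable.mem_of_threshold_lt (hab : a ≠ b) {x : ℝ} (h : threshold f a b α < x) :
    α + (fun _ => x) ∈ RPSet f a b := by
  have hne : {x : ℝ | α + (fun _ => x) ∈ RPSet f a b}.Nonempty := by
    obtain ⟨μ, hμ⟩ := hf.rpSet_nonempty hni a b
    obtain ⟨K, hK⟩ := Finite.exists_le fun i => μ i - α i
    exact ⟨K, isUpperSet_rpSet hab (fun i => by simp only [Pi.add_apply]; linarith [hK i]) hμ⟩
  obtain ⟨y, hy, hyx⟩ := exists_lt_of_csInf_lt hne h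
  exact isUpperSet_rpSet hab (fun i => by simp only [Pi.add_apply]; linarith) hy

theorem Implementable.threshold_le_threshold_add (hab : a ≠ b) {δ : ℝ}
    (h : ∀ x, α + (fun _ => x) ∈ RPSet f a b → β + (fun _ => x + δ) ∈ RPSet f a b) :
    threshold f a b β ≤ threshold f a b α + δ :=
  le_of_forall_gt_imp_ge_of_dense fun y hy => by
    simpa using hf.threshold_le hni hab (h _ (hf.mem_of_threshold_lt hni hab
      (show threshold f a b α < y - δ by linarith)))

theorem Implementable.threshold_antitone (hab : a ≠ b) : Antitone (threshold f a b) :=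
  fun α β hle => by
    simpa using hf.threshold_le_threshold_add hni hab (δ := 0) fun x hx =>
      isUpperSet_rpSet hab (fun i => by simpa using hle i) hx

theorem Implementable.threshold_add_const (hab : a ≠ b) (α : Fin n → ℝ) (δ : ℝ) :
    threshold f a b (α + fun _ => δ) = threshold f a b α - δ := by
  have h₁ := hf.threshold_le_threshold_add hni hab (α := α) (β := α + fun _ => δ) (δ := -δ)
    fun x hx => by convert hx using 1; ext; simp only [Pi.add_apply]; ring
  have h₂ := hf.threshold_le_threshold_add hni hab (α := α + fun _ => δ) (β := α) (δ := δ)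
    fun x hx => by convert hx using 1; ext; simp only [Pi.add_apply]; ring
  linarith

theorem Implementable.threshold_neg (hab : a ≠ b) (α : Fin n → ℝ) :
    threshold f b a (-α) = -threshold f a b α := by
  apply le_antisymm
  · refine le_of_forall_gt_imp_ge_of_dense fun y hy => ?_
    have hy' : ¬ α + (fun _ => -y) ∈ RPSet f a b := fun h =>
      (hf.threshold_le hni hab h).not_gt (by linarith)
    have := (hf.mem_rpSet_or_neg_mem_rpSet hni hab _).resolve_left hy'
    exact hf.threshold_le hni hab.symm (by convert this using 1; ext; simp only [Pi.add_apply, Pi.neg_apply]; ring)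
  · refine le_of_forall_pos_le_add fun ε hε => ?_
    have h₁ := hf.mem_of_threshold_lt hni hab
      (show threshold f a b α < threshold f a b α + ε / 2 by linarith)
    have h₂ := hf.mem_of_threshold_lt hni hab.symm
      (show threshold f b a (-α) < threshold f b a (-α) + ε / 2 by linarith)
    obtain ⟨i, hi⟩ := hf.exists_nonneg_add_of_mem_rpSet hab h₁ h₂
    simp only [Pi.add_apply, Pi.neg_apply] at hi
    linarith

theorem Implementable.threshold_add_le (hab : a ≠ b) (hbc : b ≠ c) (hac : a ≠ c)
    (α β : Fin n → ℝ) :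
    threshold f a c (α + β) ≤ threshold f a b α + threshold f b c β := by
  refine le_of_forall_pos_le_add fun ε hε => ?_
  have hα := hf.mem_of_threshold_lt hni hab
    (show threshold f a b α < threshold f a b α + ε / 3 by linarith)
  have hβ := hf.mem_of_threshold_lt hni hbc
    (show threshold f b c β < threshold f b c β + ε / 3 by linarith)
  exact hf.threshold_le hni hac (x := threshold f a b α + threshold f b c β + ε)
    (by convert hf.add_add_const_mem_rpSet hni hab hbc hac hα hβ (ε := ε / 3) (by linarith)
          using 1
        ext; simp only [Pi.add_apply]; ring)

theorem Implementable.threshold_add (hab : a ≠ b) (hbc : b ≠ c) (hac : a ≠ c)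
    (α β : Fin n → ℝ) :
    threshold f a c (α + β) = threshold f a b α + threshold f b c β := by
  refine le_antisymm (hf.threshold_add_le hni hab hbc hac α β) ?_
  have h := hf.threshold_add_le hni hbc.symm hab.symm hac.symm (-β) (-α)
  rw [← neg_add_rev, hf.threshold_neg hni hac, hf.threshold_neg hni hbc,
    hf.threshold_neg hni hab] at h
  linarith

end threshold

variable (f) in
noncomputable def relThreshold (a b : A) (α : Fin n → ℝ) : ℝ :=
  threshold f a b α - threshold f a b 0

section relThreshold

variable (hf : Implementable f) (hni : NonImposition f) {a b c d : A}
include hf hni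

theorem Implementable.relThreshold_antitone (hab : a ≠ b) : Antitone (relThreshold f a b) :=
  fun _ _ hle => sub_le_sub_right (hf.threshold_antitone hni hab hle) _

theorem Implementable.relThreshold_const (hab : a ≠ b) (δ : ℝ) :
    relThreshold f a b (fun _ => δ) = -δ := by
  have h := hf.threshold_add_const hni hab 0 δ
  rw [zero_add] at h
  rw [relThreshold, h]
  ring

variable [Fintype A] (hA : 3 ≤ Fintype.card A)
include hA

theorem Implementable.relThreshold_eq (hab : a ≠ b) (hcd : c ≠ d) (α : Fin n → ℝ) :
    relThreshold f a b α = relThreshold f c d α := by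
  refine offDiag_eq_of_triples hA (fun a b => relThreshold f a b α)
    (fun a b c hab hbc hac => ?_) (fun a b c hab hbc hac => ?_) hab hcd
  all_goals
    have h₀ := hf.threshold_add hni hab hbc hac 0 0
    simp only [relThreshold, add_zero] at h₀ ⊢
  · have := hf.threshold_add hni hab hbc hac α 0
    rw [add_zero] at this
    linarith
  · have := hf.threshold_add hni hab hbc hac 0 α
    rw [zero_add] at this
    linarith

theorem Implementable.relThreshold_add (hac : a ≠ c) (α β : Fin n → ℝ) :
    relThreshold f a c (α + β) = relThreshold f a c α + relThreshold f a c β := by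
  obtain ⟨b, hba, hbc⟩ := exists_ne_ne_of_three_le_card hA a c
  have h₀ := hf.threshold_add hni hba.symm hbc hac 0 0
  have h := hf.threshold_add hni hba.symm hbc hac α β
  rw [add_zero] at h₀
  rw [hf.relThreshold_eq hni hA hac hba.symm α, hf.relThreshold_eq hni hA hac hbc β]
  simp only [relThreshold]
  linarith

end relThreshold

theorem Implementable.exists_threshold_eq [Fintype A] (hf : Implementable f)
    (hni : NonImposition f) (hA : 3 ≤ Fintype.card A) :
    ∃ lam : Fin n → ℝ, ∃ κ : A → ℝ, (∀ i, 0 ≤ lam i) ∧ ∑ i, lam i = 1 ∧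
      ∀ a b, a ≠ b → ∀ α, threshold f a b α = κ a - κ b - ∑ i, lam i * α i := by
  obtain ⟨a₀, b₀, h₀⟩ := Fintype.exists_pair_of_one_lt_card (α := A) (by omega)
  let H : (Fin n → ℝ) →+ ℝ := AddMonoidHom.mk' (fun α => -relThreshold f a₀ b₀ α)
    fun α β => by rw [hf.relThreshold_add hni hA h₀]; ring
  obtain ⟨lam, hlam, hsum, hH⟩ := exists_weights_of_monotone H
    (fun α β hle => neg_le_neg (hf.relThreshold_antitone hni h₀ hle))
    (fun δ => neg_eq_iff_eq_neg.mpr (hf.relThreshold_const hni h₀ δ))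
  obtain ⟨κ, hκ⟩ := exists_sub_eq_of_cocycle (fun a b => threshold f a b 0)
    (fun a b hab => by simpa using hf.threshold_neg hni hab.symm 0)
    (fun a b c hab hbc hac => by simpa using hf.threshold_add hni hab hbc hac 0 0)
  refine ⟨lam, κ, hlam, hsum, fun a b hab α => ?_⟩
  have hrel := hf.relThreshold_eq hni hA hab h₀ α
  have := hH α
  simp only [H, AddMonoidHom.mk'_apply, relThreshold] at this hrel
  linarith [hκ a b hab]

end

theorem roberts_affine_maximizer_general
    {n : ℕ} {A : Type*} [Fintype A] [DecidableEq A]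
    (hA : 3 ≤ Fintype.card A)
    (f : Profile n A → A)
    (hf : Implementable f) (hni : NonImposition f) :
    ∃ lam : Fin n → ℝ, ∃ κ : A → ℝ, (∀ i, 0 ≤ lam i) ∧ lam ≠ 0 ∧
      ∀ t : Profile n A, ∀ b : A,
        (∑ i, lam i * t b i) - κ b ≤ (∑ i, lam i * t (f t) i) - κ (f t) := by
  obtain ⟨lam, κ, hlam, hsum, hthreshold⟩ := hf.exists_threshold_eq hni hA
  refine ⟨lam, κ, hlam, fun h => by simp [h] at hsum, fun t b => ?_⟩
  rcases eq_or_ne (f t) b with hb | hb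
  · rw [hb]
  have h := hf.threshold_le hni hb (α := t (f t) - t b) (x := 0)
    (by simpa [← Pi.zero_def] using hf.sub_mem_rpSet t b)
  simp only [hthreshold _ _ hb, Pi.sub_apply, mul_sub, Finset.sum_sub_distrib] at h
  linarith

/-- Roberts' Affine Maximizer Theorem: an implementable social
choice function on `𝕋ⁿ = ℝ^{m×n}` satisfying non-imposition is an affine maximizer:
for some non-zero non-negative weights `lam` and some `κ : A → ℝ`,
`f t` maximizes `∑ i, lam i * t a i - κ a` over `a`. -/
theorem roberts_affine_maximizer
    {n : ℕ} {A : Type*} [Fintype A] [DecidableEq A]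
    (hn : 0 < n) (hA : 3 ≤ Fintype.card A)
    (f : Profile n A → A)
    (hf : Implementable f) (hni : NonImposition f) :
    ∃ lam : Fin n → ℝ, ∃ κ : A → ℝ, (∀ i, 0 ≤ lam i) ∧ lam ≠ 0 ∧
      ∀ t : Profile n A, ∀ b : A,
        (∑ i, lam i * t b i) - κ b ≤ (∑ i, lam i * t (f t) i) - κ (f t) :=
  roberts_affine_maximizer_general hA f hf hni
end
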